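/- arXiv:2102.04905 — 7 statements merged into one kernel-verified Lean document; each statement's English description precedes it below -/
import Mathlib

section
/- Let λ0, λ1 > 0, γ0 > γ1, t > 0 and γ1·t < x < γ0·t. Then for every natural number n ≥ 0, ∫_0^{ξ0(t,x)} λ0·e^{−λ0·τ} · λ1 · z(t−τ, x−γ0·τ)^n/(n!)² · θ(t−τ, x−γ0·τ) dτ = λ0·λ1·ξ0(t,x) · z(t,x)^n/(n!·(n+1)!) · θ(t,x). (This verifies that the explicit odd-switch telegraph density p_1(t,x;2n+1) = λ1·z(t,x)^n/(n!)²·θ(t,x) produces the even-switch density p_0(t,x;2n+2) = λ0·λ1·ξ0(t,x)·z(t,x)^n/(n!(n+1)!)·θ(t,x) under conditioning on the first velocity switch from state 0.) -/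
open Real Filter MeasureTheory

/-- `ξ₀(t,x) = (x − γ₁ t)/(γ₀ − γ₁)`. -/
noncomputable def xi0 (g0 g1 t x : ℝ) : ℝ := (x - g1 * t) / (g0 - g1)

/-- `ξ₁(t,x) = (γ₀ t − x)/(γ₀ − γ₁)`. -/
noncomputable def xi1 (g0 g1 t x : ℝ) : ℝ := (g0 * t - x) / (g0 - g1)

/-- `z(t,x) = λ₀ λ₁ ξ₀(t,x) ξ₁(t,x)`. -/
noncomputable def zf (l0 l1 g0 g1 t x : ℝ) : ℝ := l0 * l1 * xi0 g0 g1 t x * xi1 g0 g1 t x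

/-- `θ(t,x) = exp(−λ₀ ξ₀(t,x) − λ₁ ξ₁(t,x))/(γ₀ − γ₁)`. -/
noncomputable def thetaf (l0 l1 g0 g1 t x : ℝ) : ℝ :=
  Real.exp (-(l0 * xi0 g0 g1 t x) - l1 * xi1 g0 g1 t x) / (g0 - g1)

/-!
Running with velocity `γ₀` for a time `τ` moves `(t, x)` to `(t - τ, x - γ₀ τ)`, which lowers the
occupation time `ξ₀` of state `0` by `τ` and leaves `ξ₁` unchanged. Hence the factor `e^{-λ₀ τ}`
recombines with `θ` at the shifted point into `θ(t,x)`, `z` at the shifted point is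
`λ₀ λ₁ (ξ₀ - τ) ξ₁`, and the integral reduces to `∫₀^{ξ₀} (ξ₀ - τ)ⁿ dτ = ξ₀ⁿ⁺¹/(n+1)`.
-/

section Shift

variable {l0 l1 g0 g1 : ℝ} (t x τ : ℝ)

theorem xi0_shift (hg : g0 ≠ g1) : xi0 g0 g1 (t - τ) (x - g0 * τ) = xi0 g0 g1 t x - τ := by
  have : g0 - g1 ≠ 0 := sub_ne_zero.mpr hg
  simp only [xi0]
  field_simp
  ring

theorem xi1_shift : xi1 g0 g1 (t - τ) (x - g0 * τ) = xi1 g0 g1 t x := by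
  simp only [xi1]
  ring_nf

theorem zf_shift (hg : g0 ≠ g1) :
    zf l0 l1 g0 g1 (t - τ) (x - g0 * τ) = l0 * l1 * xi1 g0 g1 t x * (xi0 g0 g1 t x - τ) := by
  rw [zf, xi0_shift t x τ hg, xi1_shift]
  ring

theorem exp_mul_thetaf_shift (hg : g0 ≠ g1) :
    Real.exp (-(l0 * τ)) * thetaf l0 l1 g0 g1 (t - τ) (x - g0 * τ) = thetaf l0 l1 g0 g1 t x := by
  rw [thetaf, thetaf, xi0_shift t x τ hg, xi1_shift, mul_div_assoc', ← Real.exp_add]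
  ring_nf

end Shift

theorem integral_sub_pow (a : ℝ) (n : ℕ) :
    ∫ τ in (0 : ℝ)..a, (a - τ) ^ n = a ^ (n + 1) / (n + 1) := by
  rw [intervalIntegral.integral_comp_sub_left (fun u => u ^ n) a]
  simp [integral_pow]

theorem telegraph_density_first_switch_even_general (l0 l1 g0 g1 t x : ℝ)
    (hg : g1 < g0) (n : ℕ) :
    ∫ τ in (0 : ℝ)..(xi0 g0 g1 t x),
        l0 * Real.exp (-(l0 * τ)) * l1 *
          (zf l0 l1 g0 g1 (t - τ) (x - g0 * τ)) ^ n / (Nat.factorial n : ℝ) ^ 2 *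
          thetaf l0 l1 g0 g1 (t - τ) (x - g0 * τ)
      = l0 * l1 * xi0 g0 g1 t x * (zf l0 l1 g0 g1 t x) ^ n
          / ((Nat.factorial n : ℝ) * (Nat.factorial (n + 1) : ℝ)) * thetaf l0 l1 g0 g1 t x := by
  have integrand_eq : ∀ τ : ℝ,
      l0 * Real.exp (-(l0 * τ)) * l1 *
          (zf l0 l1 g0 g1 (t - τ) (x - g0 * τ)) ^ n / (Nat.factorial n : ℝ) ^ 2 *
          thetaf l0 l1 g0 g1 (t - τ) (x - g0 * τ)
        = l0 * l1 * (l0 * l1 * xi1 g0 g1 t x) ^ n / (Nat.factorial n : ℝ) ^ 2 *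
            thetaf l0 l1 g0 g1 t x * (xi0 g0 g1 t x - τ) ^ n := by
    intro τ
    rw [zf_shift t x τ hg.ne', mul_pow, ← exp_mul_thetaf_shift (l1 := l1) t x τ hg.ne']
    ring
  simp_rw [integrand_eq]
  rw [intervalIntegral.integral_const_mul, integral_sub_pow, Nat.factorial_succ, Nat.cast_mul, zf]
  have hfn : (Nat.factorial n : ℝ) ≠ 0 := Nat.cast_ne_zero.mpr n.factorial_ne_zero
  push_cast
  field_simp
  ring

/-- conditioning on the first velocity switch from state 0 turns the odd-switch
density `p₁(t,x;2n+1)` into the even-switch density `p₀(t,x;2n+2)`. -/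
theorem telegraph_density_first_switch_even (l0 l1 g0 g1 t x : ℝ)
    (hl0 : 0 < l0) (hl1 : 0 < l1) (hg : g1 < g0) (ht : 0 < t)
    (hx1 : g1 * t < x) (hx2 : x < g0 * t) (n : ℕ) :
    ∫ τ in (0 : ℝ)..(xi0 g0 g1 t x),
        l0 * Real.exp (-(l0 * τ)) * l1 *
          (zf l0 l1 g0 g1 (t - τ) (x - g0 * τ)) ^ n / (Nat.factorial n : ℝ) ^ 2 *
          thetaf l0 l1 g0 g1 (t - τ) (x - g0 * τ)
      = l0 * l1 * xi0 g0 g1 t x * (zf l0 l1 g0 g1 t x) ^ n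
          / ((Nat.factorial n : ℝ) * (Nat.factorial (n + 1) : ℝ)) * thetaf l0 l1 g0 g1 t x :=
  telegraph_density_first_switch_even_general l0 l1 g0 g1 t x hg n
end

section
/- Let λ0, λ1 > 0, γ0 > 0 > γ1, y > 0 and t > y/γ0. Then for every natural number n ≥ 1, ∫_0^{y/γ0} λ0·e^{−λ0·τ} · (λ1/ξ0(t−τ, y−γ0·τ)) · z(t−τ, y−γ0·τ)^{n−1}/((n−1)!)² · θ(t−τ, y−γ0·τ) · ((y − γ0·τ) − (γ1/n)·ξ1(t−τ, y−γ0·τ)) dτ = λ0·λ1·y · z(t,y)^{n−1}/((n−1)!·n!) · θ(t,y). (This is the induction step of Theorem 2.1 showing that the explicit first-passage density f_1(·;2n−1) = (λ1/ξ0)·z^{n−1}/((n−1)!)²·θ·(y − γ1·ξ1/n) yields f_0(t,y;2n) = λ0·λ1·y·z^{n−1}/((n−1)!·n!)·θ via the coupled integral equation obtained by conditioning on the first velocity switch.) -/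
open Real Filter MeasureTheory

/-!
The integrand is `τ ↦ λ₀ e^{-λ₀τ} f₁(t-τ, y-γ₀τ; 2n-1)`, and it is the `τ`-derivative of
`-e^{-λ₀τ} f₀(t-τ, y-γ₀τ; 2n)`: in other words `f₀` solves the transport equation
`(∂ₜ + γ₀ ∂ₓ + λ₀) f₀ = λ₀ f₁`. Along the characteristic `(t-τ, y-γ₀τ)` the coordinate `ξ₁` is
constant and `ξ₀` decreases at unit speed, so both sides are explicit polynomials in `ξ₀ - τ` and
the derivative is a direct computation. The fundamental theorem of calculus then evaluates the
integral: the boundary term at `τ = y/γ₀` vanishes because `f₀(t,x)` carries the factor `x`.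
-/

section Characteristic

variable {l0 l1 g0 g1 : ℝ}

theorem xi0_characteristic (hg : g0 ≠ g1) (t x s : ℝ) :
    xi0 g0 g1 (t - s) (x - g0 * s) = xi0 g0 g1 t x - s := by
  have : g0 - g1 ≠ 0 := sub_ne_zero.mpr hg
  unfold xi0
  field_simp
  ring

theorem xi1_characteristic (t x s : ℝ) :
    xi1 g0 g1 (t - s) (x - g0 * s) = xi1 g0 g1 t x := by
  unfold xi1
  ring_nf

theorem zf_characteristic (hg : g0 ≠ g1) (t x s : ℝ) :
    zf l0 l1 g0 g1 (t - s) (x - g0 * s) = l0 * l1 * (xi0 g0 g1 t x - s) * xi1 g0 g1 t x := by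
  rw [zf, xi0_characteristic hg, xi1_characteristic]

theorem thetaf_characteristic (hg : g0 ≠ g1) (t x s : ℝ) :
    thetaf l0 l1 g0 g1 (t - s) (x - g0 * s) = exp (l0 * s) * thetaf l0 l1 g0 g1 t x := by
  rw [thetaf, thetaf, xi0_characteristic hg, xi1_characteristic, mul_div_assoc', ← exp_add]
  ring_nf

theorem g0_mul_xi0_add_g1_mul_xi1 (hg : g0 ≠ g1) (t x : ℝ) :
    g0 * xi0 g0 g1 t x + g1 * xi1 g0 g1 t x = x := by
  have : g0 - g1 ≠ 0 := sub_ne_zero.mpr hg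
  unfold xi0 xi1
  field_simp
  ring

theorem xi0_pos (hg1 : g1 < 0) (hg : g1 < g0) {t x : ℝ} (ht : 0 < t) (hx : 0 ≤ x) :
    0 < xi0 g0 g1 t x :=
  div_pos (by nlinarith) (sub_pos.mpr hg)

end Characteristic

section Density

variable (l0 l1 g0 g1 : ℝ)

/-- The paper's `f₁(t,x;2n-1)`. -/
noncomputable def fptDensityOdd (n : ℕ) (t x : ℝ) : ℝ :=
  l1 / xi0 g0 g1 t x * zf l0 l1 g0 g1 t x ^ (n - 1) / (Nat.factorial (n - 1) : ℝ) ^ 2 *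
    thetaf l0 l1 g0 g1 t x * (x - g1 / n * xi1 g0 g1 t x)

/-- The paper's `f₀(t,x;2n)`. -/
noncomputable def fptDensityEven (n : ℕ) (t x : ℝ) : ℝ :=
  l0 * l1 * x * zf l0 l1 g0 g1 t x ^ (n - 1) / ((Nat.factorial (n - 1) : ℝ) * Nat.factorial n) *
    thetaf l0 l1 g0 g1 t x

variable {l0 l1 g0 g1}

theorem exp_mul_fptDensityEven_characteristic (hg : g0 ≠ g1) (m : ℕ) (t x s : ℝ) :
    exp (-(l0 * s)) * fptDensityEven l0 l1 g0 g1 (m + 1) (t - s) (x - g0 * s) =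
      l0 * l1 * (l0 * l1 * xi1 g0 g1 t x) ^ m * thetaf l0 l1 g0 g1 t x /
          (m.factorial * (m + 1).factorial) * ((x - g0 * s) * (xi0 g0 g1 t x - s) ^ m) := by
  rw [fptDensityEven, zf_characteristic hg, thetaf_characteristic hg, Nat.add_sub_cancel,
    exp_neg, mul_pow, mul_pow]
  field_simp
  ring

theorem exp_mul_fptDensityOdd_characteristic (hg : g0 ≠ g1) (m : ℕ) {t x s : ℝ}
    (hs : xi0 g0 g1 t x - s ≠ 0) :
    exp (-(l0 * s)) * fptDensityOdd l0 l1 g0 g1 (m + 1) (t - s) (x - g0 * s) =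
      l1 * (l0 * l1 * xi1 g0 g1 t x) ^ m * thetaf l0 l1 g0 g1 t x / (m.factorial : ℝ) ^ 2 *
        ((xi0 g0 g1 t x - s) ^ m / (xi0 g0 g1 t x - s) *
          (x - g0 * s - g1 / (m + 1) * xi1 g0 g1 t x)) := by
  rw [fptDensityOdd, zf_characteristic hg, thetaf_characteristic hg, xi0_characteristic hg,
    xi1_characteristic, Nat.add_sub_cancel, exp_neg, mul_pow, mul_pow]
  push_cast
  field_simp
  ring

theorem hasDerivAt_exp_mul_fptDensityEven_characteristic (hg : g0 ≠ g1) (m : ℕ) {t x s : ℝ}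
    (hs : xi0 g0 g1 t x - s ≠ 0) :
    HasDerivAt
      (fun s ↦ -(exp (-(l0 * s)) * fptDensityEven l0 l1 g0 g1 (m + 1) (t - s) (x - g0 * s)))
      (l0 * exp (-(l0 * s)) * fptDensityOdd l0 l1 g0 g1 (m + 1) (t - s) (x - g0 * s)) s := by
  simp_rw [exp_mul_fptDensityEven_characteristic hg]
  rw [mul_assoc l0 (exp (-(l0 * s))), exp_mul_fptDensityOdd_characteristic hg m hs]
  set a := xi0 g0 g1 t x
  set b := xi1 g0 g1 t x
  have hlin := ((hasDerivAt_id' s).const_mul g0).const_sub x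
  have hpow := ((hasDerivAt_id' s).const_sub a).fun_pow m
  refine (((hlin.fun_mul hpow).const_mul (l0 * l1 * (l0 * l1 * b) ^ m *
    thetaf l0 l1 g0 g1 t x / (m.factorial * (m + 1).factorial))).neg).congr_deriv ?_
  have hx : x = g0 * a + g1 * b := (g0_mul_xi0_add_g1_mul_xi1 hg t x).symm
  rcases m with _ | k
  · simp only [pow_zero, Nat.cast_zero, zero_mul, mul_zero, add_zero, Nat.factorial]
    field_simp
    rw [hx]; ring
  · simp only [Nat.add_sub_cancel, pow_succ, Nat.factorial_succ]
    push_cast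
    field_simp
    rw [hx]; ring

theorem continuousOn_fptDensityOdd_characteristic (n : ℕ) (t x : ℝ) {S : Set ℝ}
    (hS : ∀ s ∈ S, xi0 g0 g1 (t - s) (x - g0 * s) ≠ 0) :
    ContinuousOn (fun s ↦ fptDensityOdd l0 l1 g0 g1 n (t - s) (x - g0 * s)) S := by
  have h0 : ContinuousOn (fun s ↦ xi0 g0 g1 (t - s) (x - g0 * s)) S := by
    unfold xi0; fun_prop
  have h1 : ContinuousOn (fun s ↦ xi1 g0 g1 (t - s) (x - g0 * s)) S := by
    unfold xi1; fun_prop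
  unfold fptDensityOdd zf thetaf
  fun_prop (disch := assumption)

end Density

theorem fpt_induction_step_even_general (l0 l1 g0 g1 t y : ℝ)
    (hg0 : 0 < g0) (hg1 : g1 < 0)
    (hy : 0 < y) (ht : y / g0 < t) (n : ℕ) (hn : 1 ≤ n) :
    ∫ τ in (0 : ℝ)..(y / g0),
        l0 * Real.exp (-(l0 * τ)) *
          (l1 / xi0 g0 g1 (t - τ) (y - g0 * τ)) *
          (zf l0 l1 g0 g1 (t - τ) (y - g0 * τ)) ^ (n - 1) / (Nat.factorial (n - 1) : ℝ) ^ 2 *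
          thetaf l0 l1 g0 g1 (t - τ) (y - g0 * τ) *
          ((y - g0 * τ) - (g1 / (n : ℝ)) * xi1 g0 g1 (t - τ) (y - g0 * τ))
      = l0 * l1 * y * (zf l0 l1 g0 g1 t y) ^ (n - 1)
          / ((Nat.factorial (n - 1) : ℝ) * (Nat.factorial n : ℝ)) * thetaf l0 l1 g0 g1 t y := by
  obtain ⟨m, rfl⟩ := Nat.exists_eq_add_of_le' hn
  have hg : g0 ≠ g1 := by linarith
  have hxi0 : ∀ τ ∈ Set.uIcc 0 (y / g0), 0 < xi0 g0 g1 (t - τ) (y - g0 * τ) := by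
    intro τ hτ
    rw [Set.uIcc_of_le (div_pos hy hg0).le] at hτ
    exact xi0_pos hg1 (by linarith) (by linarith [hτ.2])
      (by linarith [(le_div_iff₀' hg0).mp hτ.2])
  have hderiv : ∀ τ ∈ Set.uIcc 0 (y / g0), HasDerivAt
      (fun s ↦ -(exp (-(l0 * s)) * fptDensityEven l0 l1 g0 g1 (m + 1) (t - s) (y - g0 * s)))
      (l0 * exp (-(l0 * τ)) * fptDensityOdd l0 l1 g0 g1 (m + 1) (t - τ) (y - g0 * τ)) τ :=
    fun τ hτ ↦ hasDerivAt_exp_mul_fptDensityEven_characteristic hg m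
      (xi0_characteristic hg t y τ ▸ (hxi0 τ hτ).ne')
  have hint : IntervalIntegrable
      (fun τ ↦ l0 * exp (-(l0 * τ)) * fptDensityOdd l0 l1 g0 g1 (m + 1) (t - τ) (y - g0 * τ))
      volume 0 (y / g0) :=
    ((continuous_const.mul (by fun_prop)).continuousOn.mul
      (continuousOn_fptDensityOdd_characteristic (m + 1) t y
        fun τ hτ ↦ (hxi0 τ hτ).ne')).intervalIntegrable
  show _ = fptDensityEven l0 l1 g0 g1 (m + 1) t y
  calc _ = ∫ τ in (0 : ℝ)..(y / g0),
          l0 * exp (-(l0 * τ)) * fptDensityOdd l0 l1 g0 g1 (m + 1) (t - τ) (y - g0 * τ) := by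
        simp only [fptDensityOdd, mul_assoc, mul_div_assoc]
    _ = _ := by
        rw [intervalIntegral.integral_eq_sub_of_hasDerivAt hderiv hint]
        simp [fptDensityEven, mul_div_cancel₀ y hg0.ne']

/-- induction step of Theorem 2.1 — the first-passage density `f₁(·;2n−1)`
yields `f₀(t,y;2n)` via the coupled integral equation (conditioning on the first switch). -/
theorem fpt_induction_step_even (l0 l1 g0 g1 t y : ℝ)
    (hl0 : 0 < l0) (hl1 : 0 < l1) (hg0 : 0 < g0) (hg1 : g1 < 0)
    (hy : 0 < y) (ht : y / g0 < t) (n : ℕ) (hn : 1 ≤ n) :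
    ∫ τ in (0 : ℝ)..(y / g0),
        l0 * Real.exp (-(l0 * τ)) *
          (l1 / xi0 g0 g1 (t - τ) (y - g0 * τ)) *
          (zf l0 l1 g0 g1 (t - τ) (y - g0 * τ)) ^ (n - 1) / (Nat.factorial (n - 1) : ℝ) ^ 2 *
          thetaf l0 l1 g0 g1 (t - τ) (y - g0 * τ) *
          ((y - g0 * τ) - (g1 / (n : ℝ)) * xi1 g0 g1 (t - τ) (y - g0 * τ))
      = l0 * l1 * y * (zf l0 l1 g0 g1 t y) ^ (n - 1)
          / ((Nat.factorial (n - 1) : ℝ) * (Nat.factorial n : ℝ)) * thetaf l0 l1 g0 g1 t y :=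
  fpt_induction_step_even_general l0 l1 g0 g1 t y hg0 hg1 hy ht n hn
end

section
/- Let λ0, λ1 > 0, γ0 > γ1 and t > 0. Then e^{−λ0·t} + ∫_{γ1·t}^{γ0·t} λ0·(ℐ0(z(t,x)) + λ1·ξ0(t,x)·ℐ1(z(t,x)))·θ(t,x) dx = 1. (This says that the distribution of the telegraph particle position Γ(t) started from state 0 — an atom of mass e^{−λ0·t} at x = γ0·t plus the absolutely continuous part with the stated density on (γ1·t, γ0·t) — is a probability distribution.) -/
open Real Filter MeasureTheory

/-- `ℐ₀(z) = ∑ zⁿ/(n!)² = I₀(2√z)`. -/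
noncomputable def calI0 (z : ℝ) : ℝ := ∑' n : ℕ, z ^ n / (Nat.factorial n : ℝ) ^ 2

/-- `ℐ₁(z) = ∑ zⁿ/(n!·(n+1)!) = I₁(2√z)/√z`. -/
noncomputable def calI1 (z : ℝ) : ℝ :=
  ∑' n : ℕ, z ^ n / ((Nat.factorial n : ℝ) * (Nat.factorial (n + 1) : ℝ))

/-!
Under `x = γ₁t + (γ₀ - γ₁)u` the density becomes a density in `u ∈ (0, t)` whose series is
`∑ₖ hₖ(u)`, `hₖ(u) = λ₀ pₖ(λ₁(t - u)) pₖ(λ₀u) + λ₁ pₖ(λ₁(t - u)) pₖ₊₁(λ₀u)`, with the Poisson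
weights `pₖ(r) = e^{-r} rᵏ/k!`. Let `Tₖ = 1 - ∑_{j ≤ k} pⱼ` be the Poisson tails. Then
`Φ_N(u) = ∑_{k ≤ N} pₖ(λ₁(t - u)) Tₖ(λ₀u)` has derivative `∑_{k ≤ N} hₖ + r_N` with
`0 ≤ r_N ≤ λ₁(λ₁t)ᴺ/N!`, and `Φ_N(0) = 0`, `Φ_N(t) = 1 - e^{-λ₀t}`. So the nonnegative integrals
`∫ hₖ` sum to `1 - e^{-λ₀t}`, which also allows exchanging the sum with the integral.
-/

namespace Telegraph

open Finset
open scoped Nat Topology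

noncomputable def poissonWeight (k : ℕ) (r : ℝ) : ℝ := exp (-r) * r ^ k / k !

noncomputable def poissonTail (k : ℕ) (r : ℝ) : ℝ := 1 - ∑ j ∈ range (k + 1), poissonWeight j r

@[fun_prop]
lemma continuous_poissonWeight (k : ℕ) : Continuous (poissonWeight k) := by
  unfold poissonWeight; fun_prop

@[simp]
lemma poissonWeight_zero_left (r : ℝ) : poissonWeight 0 r = exp (-r) := by
  simp [poissonWeight]

@[simp]
lemma poissonWeight_succ_zero_right (k : ℕ) : poissonWeight (k + 1) 0 = 0 := by
  simp [poissonWeight]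

lemma poissonWeight_nonneg {r : ℝ} (hr : 0 ≤ r) (k : ℕ) : 0 ≤ poissonWeight k r := by
  unfold poissonWeight; positivity

lemma poissonWeight_le_pow_div_factorial {r : ℝ} (hr : 0 ≤ r) (k : ℕ) :
    poissonWeight k r ≤ r ^ k / k ! := by
  unfold poissonWeight
  gcongr
  exact mul_le_of_le_one_left (by positivity) (exp_le_one_iff.mpr (neg_nonpos.mpr hr))

lemma hasDerivAt_poissonWeight_zero (r : ℝ) :
    HasDerivAt (poissonWeight 0) (-poissonWeight 0 r) r := by
  simpa [funext poissonWeight_zero_left] using (hasDerivAt_neg r).exp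

lemma hasDerivAt_poissonWeight_succ (k : ℕ) (r : ℝ) :
    HasDerivAt (poissonWeight (k + 1)) (poissonWeight k r - poissonWeight (k + 1) r) r := by
  refine ((((hasDerivAt_neg r).exp).mul (hasDerivAt_pow (k + 1) r)).div_const
    ((k + 1)! : ℝ)).congr_deriv ?_
  simp only [poissonWeight, Nat.factorial_succ, Nat.cast_mul, Nat.cast_succ, add_tsub_cancel_right]
  field_simp
  ring

@[fun_prop]
lemma continuous_poissonTail (k : ℕ) : Continuous (poissonTail k) := by
  unfold poissonTail; fun_prop

@[simp]
lemma poissonTail_zero_left (r : ℝ) : poissonTail 0 r = 1 - exp (-r) := by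
  simp [poissonTail]

@[simp]
lemma poissonTail_zero_right (k : ℕ) : poissonTail k 0 = 0 := by
  simp [poissonTail, sum_range_succ', poissonWeight]

lemma poissonTail_succ (k : ℕ) (r : ℝ) :
    poissonTail (k + 1) r = poissonTail k r - poissonWeight (k + 1) r := by
  rw [poissonTail, poissonTail, sum_range_succ]; ring

lemma hasDerivAt_poissonTail (k : ℕ) (r : ℝ) :
    HasDerivAt (poissonTail k) (poissonWeight k r) r := by
  induction k with
  | zero =>
    simpa [funext poissonTail_zero_left] using (hasDerivAt_poissonWeight_zero r).const_sub 1
  | succ k ih =>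
    rw [show poissonTail (k + 1) = poissonTail k - poissonWeight (k + 1) from
      funext (poissonTail_succ k)]
    simpa using ih.sub (hasDerivAt_poissonWeight_succ k r)

lemma poissonTail_nonneg {r : ℝ} (hr : 0 ≤ r) (k : ℕ) : 0 ≤ poissonTail k r := by
  have h : ∑ j ∈ range (k + 1), poissonWeight j r =
      exp (-r) * ∑ j ∈ range (k + 1), r ^ j / j ! := by
    simp only [mul_sum, poissonWeight, mul_div_assoc]
  have hsum := mul_le_mul_of_nonneg_left (sum_le_exp_of_nonneg hr (k + 1)) (exp_pos (-r)).le
  rw [← exp_add, neg_add_cancel, exp_zero, ← h] at hsum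
  exact sub_nonneg.mpr hsum

lemma poissonTail_le_one {r : ℝ} (hr : 0 ≤ r) (k : ℕ) : poissonTail k r ≤ 1 :=
  sub_le_self _ (sum_nonneg fun j _ => poissonWeight_nonneg hr j)

section Telescoping

variable (l0 l1 t : ℝ)

noncomputable def densityTerm (k : ℕ) (u : ℝ) : ℝ :=
  l0 * poissonWeight k (l1 * (t - u)) * poissonWeight k (l0 * u) +
    l1 * poissonWeight k (l1 * (t - u)) * poissonWeight (k + 1) (l0 * u)

noncomputable def remainderTerm (k : ℕ) (u : ℝ) : ℝ :=
  l1 * poissonWeight k (l1 * (t - u)) * poissonTail (k + 1) (l0 * u)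

noncomputable def primitiveTerm (k : ℕ) (u : ℝ) : ℝ :=
  poissonWeight k (l1 * (t - u)) * poissonTail k (l0 * u)

@[fun_prop]
lemma continuous_densityTerm (k : ℕ) : Continuous (densityTerm l0 l1 t k) := by
  unfold densityTerm; fun_prop

@[fun_prop]
lemma continuous_remainderTerm (k : ℕ) : Continuous (remainderTerm l0 l1 t k) := by
  unfold remainderTerm; fun_prop

lemma hasDerivAt_primitiveTerm_zero (u : ℝ) :
    HasDerivAt (primitiveTerm l0 l1 t 0)
      (densityTerm l0 l1 t 0 u + remainderTerm l0 l1 t 0 u) u := by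
  have hb : HasDerivAt (fun u => l1 * (t - u)) (-l1) u := by
    simpa using ((hasDerivAt_id u).const_sub t).const_mul l1
  have ha : HasDerivAt (fun u => l0 * u) l0 u := by simpa using (hasDerivAt_id u).const_mul l0
  refine (((hasDerivAt_poissonWeight_zero _).comp u hb).mul
    ((hasDerivAt_poissonTail 0 _).comp u ha)).congr_deriv ?_
  simp only [densityTerm, remainderTerm, poissonTail_succ, Function.comp_apply]
  ring

lemma hasDerivAt_primitiveTerm_succ (k : ℕ) (u : ℝ) :
    HasDerivAt (primitiveTerm l0 l1 t (k + 1))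
      (densityTerm l0 l1 t (k + 1) u + remainderTerm l0 l1 t (k + 1) u -
        remainderTerm l0 l1 t k u) u := by
  have hb : HasDerivAt (fun u => l1 * (t - u)) (-l1) u := by
    simpa using ((hasDerivAt_id u).const_sub t).const_mul l1
  have ha : HasDerivAt (fun u => l0 * u) l0 u := by simpa using (hasDerivAt_id u).const_mul l0
  refine (((hasDerivAt_poissonWeight_succ k _).comp u hb).mul
    ((hasDerivAt_poissonTail (k + 1) _).comp u ha)).congr_deriv ?_
  simp only [densityTerm, remainderTerm, poissonTail_succ (k + 1), Function.comp_apply]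
  ring

lemma hasDerivAt_sum_primitiveTerm (N : ℕ) (u : ℝ) :
    HasDerivAt (fun u => ∑ k ∈ range (N + 1), primitiveTerm l0 l1 t k u)
      (∑ k ∈ range (N + 1), densityTerm l0 l1 t k u + remainderTerm l0 l1 t N u) u := by
  induction N with
  | zero => simpa using hasDerivAt_primitiveTerm_zero l0 l1 t u
  | succ N ih =>
    simp only [sum_range_succ _ (N + 1)]
    exact (ih.add (hasDerivAt_primitiveTerm_succ l0 l1 t N u)).congr_deriv (by ring)

lemma integral_sum_densityTerm_add_integral_remainderTerm (N : ℕ) :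
    (∫ u in (0 : ℝ)..t, ∑ k ∈ range (N + 1), densityTerm l0 l1 t k u) +
      ∫ u in (0 : ℝ)..t, remainderTerm l0 l1 t N u = 1 - exp (-(l0 * t)) := by
  rw [← intervalIntegral.integral_add (Continuous.intervalIntegrable (by fun_prop) 0 t)
      ((continuous_remainderTerm l0 l1 t N).intervalIntegrable 0 t),
    intervalIntegral.integral_eq_sub_of_hasDerivAt
      (fun u _ => hasDerivAt_sum_primitiveTerm l0 l1 t N u)
      (Continuous.intervalIntegrable (by fun_prop) 0 t)]
  simp [primitiveTerm, sum_range_succ']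

variable {l0 l1 t}

lemma densityTerm_nonneg (hl0 : 0 ≤ l0) (hl1 : 0 ≤ l1) (k : ℕ) {u : ℝ} (hu : u ∈ Set.Icc 0 t) :
    0 ≤ densityTerm l0 l1 t k u := by
  have hb := poissonWeight_nonneg (mul_nonneg hl1 (sub_nonneg.mpr hu.2)) k
  have ha := poissonWeight_nonneg (mul_nonneg hl0 hu.1) k
  have ha' := poissonWeight_nonneg (mul_nonneg hl0 hu.1) (k + 1)
  unfold densityTerm
  positivity

lemma remainderTerm_nonneg (hl0 : 0 ≤ l0) (hl1 : 0 ≤ l1) (k : ℕ) {u : ℝ} (hu : u ∈ Set.Icc 0 t) :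
    0 ≤ remainderTerm l0 l1 t k u :=
  mul_nonneg (mul_nonneg hl1 (poissonWeight_nonneg (mul_nonneg hl1 (sub_nonneg.mpr hu.2)) k))
    (poissonTail_nonneg (mul_nonneg hl0 hu.1) (k + 1))

lemma remainderTerm_le (hl0 : 0 ≤ l0) (hl1 : 0 ≤ l1) (k : ℕ) {u : ℝ} (hu : u ∈ Set.Icc 0 t) :
    remainderTerm l0 l1 t k u ≤ l1 * ((l1 * t) ^ k / k !) := by
  have hb : 0 ≤ l1 * (t - u) := mul_nonneg hl1 (sub_nonneg.mpr hu.2)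
  calc remainderTerm l0 l1 t k u ≤ l1 * poissonWeight k (l1 * (t - u)) * 1 :=
        mul_le_mul_of_nonneg_left (poissonTail_le_one (mul_nonneg hl0 hu.1) (k + 1))
          (mul_nonneg hl1 (poissonWeight_nonneg hb k))
    _ ≤ l1 * ((l1 * (t - u)) ^ k / k !) := by
        rw [mul_one]
        exact mul_le_mul_of_nonneg_left (poissonWeight_le_pow_div_factorial hb k) hl1
    _ ≤ l1 * ((l1 * t) ^ k / k !) := by
        gcongr; linarith [hu.1]

lemma tendsto_integral_remainderTerm (hl0 : 0 ≤ l0) (hl1 : 0 ≤ l1) (ht : 0 ≤ t) :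
    Tendsto (fun N => ∫ u in (0 : ℝ)..t, remainderTerm l0 l1 t N u) atTop (𝓝 0) := by
  have hbound (N : ℕ) : ∫ u in (0 : ℝ)..t, remainderTerm l0 l1 t N u ≤
      t * l1 * ((l1 * t) ^ N / N !) := by
    calc ∫ u in (0 : ℝ)..t, remainderTerm l0 l1 t N u
        ≤ ∫ _ in (0 : ℝ)..t, l1 * ((l1 * t) ^ N / N !) :=
          intervalIntegral.integral_mono_on ht
            ((continuous_remainderTerm l0 l1 t N).intervalIntegrable 0 t) intervalIntegrable_const
            fun u hu => remainderTerm_le hl0 hl1 N hu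
      _ = t * l1 * ((l1 * t) ^ N / N !) := by
          rw [intervalIntegral.integral_const, sub_zero, smul_eq_mul]; ring
  refine squeeze_zero (fun N => intervalIntegral.integral_nonneg ht
    fun u hu => remainderTerm_nonneg hl0 hl1 N hu) hbound ?_
  simpa using (FloorSemiring.tendsto_pow_div_factorial_atTop (l1 * t)).const_mul (t * l1)

lemma hasSum_integral_densityTerm (hl0 : 0 ≤ l0) (hl1 : 0 ≤ l1) (ht : 0 ≤ t) :
    HasSum (fun k => ∫ u in (0 : ℝ)..t, densityTerm l0 l1 t k u) (1 - exp (-(l0 * t))) := by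
  rw [hasSum_iff_tendsto_nat_of_nonneg fun k => intervalIntegral.integral_nonneg ht
    fun u hu => densityTerm_nonneg hl0 hl1 k hu]
  have hpartial (N : ℕ) : ∑ k ∈ range (N + 1), ∫ u in (0 : ℝ)..t, densityTerm l0 l1 t k u =
      1 - exp (-(l0 * t)) - ∫ u in (0 : ℝ)..t, remainderTerm l0 l1 t N u := by
    rw [← intervalIntegral.integral_finsetSum fun k _ =>
        (continuous_densityTerm l0 l1 t k).intervalIntegrable 0 t,
      ← integral_sum_densityTerm_add_integral_remainderTerm]
    ring
  refine (tendsto_add_atTop_iff_nat 1).mp ?_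
  simpa [hpartial] using tendsto_const_nhds.sub (tendsto_integral_remainderTerm hl0 hl1 ht)

end Telescoping

lemma summable_pow_div_factorial_mul {c : ℕ → ℝ} (hc : ∀ k, 1 ≤ c k) (z : ℝ) :
    Summable fun k => z ^ k / (k ! * c k) := by
  refine (summable_pow_div_factorial |z|).of_norm_bounded fun k => ?_
  have hc0 : 0 ≤ c k := zero_le_one.trans (hc k)
  rw [norm_div, norm_pow, Real.norm_eq_abs, Real.norm_of_nonneg (by positivity)]
  exact div_le_div_of_nonneg_left (by positivity) (by positivity)
    (le_mul_of_one_le_right (by positivity) (hc k))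

lemma hasSum_calI0 (z : ℝ) : HasSum (fun k => z ^ k / (k ! : ℝ) ^ 2) (calI0 z) := by
  simpa only [calI0, sq] using
    (summable_pow_div_factorial_mul (fun k => Nat.one_le_cast.mpr k.factorial_pos) z).hasSum

lemma hasSum_calI1 (z : ℝ) : HasSum (fun k => z ^ k / (k ! * (k + 1)! : ℝ)) (calI1 z) :=
  (summable_pow_div_factorial_mul (fun k => Nat.one_le_cast.mpr (k + 1).factorial_pos) z).hasSum

-- In the telegraph process started in state 0, `u` is the time spent in state 0 up to time `t`
-- and this is its density on the event that the state switches at least once.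
noncomputable def occupationDensity (l0 l1 t u : ℝ) : ℝ :=
  l0 * (calI0 (l0 * l1 * u * (t - u)) + l1 * u * calI1 (l0 * l1 * u * (t - u))) *
    exp (-(l0 * u) - l1 * (t - u))

lemma hasSum_densityTerm (l0 l1 t u : ℝ) :
    HasSum (fun k => densityTerm l0 l1 t k u) (occupationDensity l0 l1 t u) := by
  set z := l0 * l1 * u * (t - u)
  set E := exp (-(l0 * u) - l1 * (t - u)) with hE
  have hterm : (fun k => densityTerm l0 l1 t k u) = fun k =>
      l0 * E * (z ^ k / (k ! : ℝ) ^ 2) + l0 * l1 * u * E * (z ^ k / (k ! * (k + 1)! : ℝ)) := by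
    funext k
    rw [hE, sub_eq_add_neg, exp_add]
    simp only [densityTerm, poissonWeight, z, mul_pow, pow_succ, Nat.factorial_succ, Nat.cast_mul,
      Nat.cast_succ]
    field_simp
  have hvalue : occupationDensity l0 l1 t u = l0 * E * calI0 z + l0 * l1 * u * E * calI1 z := by
    rw [occupationDensity]; ring
  rw [hterm, hvalue]
  exact ((hasSum_calI0 z).mul_left (l0 * E)).add ((hasSum_calI1 z).mul_left (l0 * l1 * u * E))

lemma integral_occupationDensity {l0 l1 t : ℝ} (hl0 : 0 ≤ l0) (hl1 : 0 ≤ l1) (ht : 0 ≤ t) :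
    ∫ u in (0 : ℝ)..t, occupationDensity l0 l1 t u = 1 - exp (-(l0 * t)) := by
  have hsum := hasSum_integral_densityTerm hl0 hl1 ht
  simp only [intervalIntegral.integral_of_le ht] at hsum ⊢
  simp_rw [← (hasSum_densityTerm l0 l1 t _).tsum_eq]
  rw [← integral_tsum_of_summable_integral_norm
    (fun k => (continuous_densityTerm l0 l1 t k).integrableOn_Icc.mono_set Set.Ioc_subset_Icc_self),
    hsum.tsum_eq]
  refine hsum.summable.congr fun k => setIntegral_congr_fun measurableSet_Ioc fun u hu => ?_
  exact (Real.norm_of_nonneg (densityTerm_nonneg hl0 hl1 k (Set.Ioc_subset_Icc_self hu))).symm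

lemma xi0_mul_add {g0 g1 : ℝ} (hg : g0 ≠ g1) (t u : ℝ) :
    xi0 g0 g1 t ((g0 - g1) * u + g1 * t) = u := by
  rw [xi0, add_sub_cancel_right, mul_div_cancel_left₀ _ (sub_ne_zero.mpr hg)]

lemma xi1_eq_sub_xi0 {g0 g1 : ℝ} (hg : g0 ≠ g1) (t x : ℝ) :
    xi1 g0 g1 t x = t - xi0 g0 g1 t x := by
  rw [xi1, xi0, eq_sub_iff_add_eq, ← add_div, div_eq_iff (sub_ne_zero.mpr hg)]
  ring

lemma sub_mul_density_eq_occupationDensity (l0 l1 : ℝ) {g0 g1 : ℝ} (hg : g0 ≠ g1) (t x : ℝ) :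
    (g0 - g1) * (l0 * (calI0 (zf l0 l1 g0 g1 t x) + l1 * xi0 g0 g1 t x *
      calI1 (zf l0 l1 g0 g1 t x)) * thetaf l0 l1 g0 g1 t x) =
      occupationDensity l0 l1 t (xi0 g0 g1 t x) := by
  rw [occupationDensity, zf, thetaf, ← xi1_eq_sub_xi0 hg]
  field_simp [sub_ne_zero.mpr hg]

lemma integral_density_eq_integral_occupationDensity (l0 l1 : ℝ) {g0 g1 : ℝ} (hg : g0 ≠ g1)
    (t : ℝ) :
    ∫ x in (g1 * t)..(g0 * t), l0 * (calI0 (zf l0 l1 g0 g1 t x) +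
      l1 * xi0 g0 g1 t x * calI1 (zf l0 l1 g0 g1 t x)) * thetaf l0 l1 g0 g1 t x =
      ∫ u in (0 : ℝ)..t, occupationDensity l0 l1 t u := by
  have hsubst := intervalIntegral.smul_integral_comp_mul_add (a := 0) (b := t)
    (fun x => l0 * (calI0 (zf l0 l1 g0 g1 t x) +
      l1 * xi0 g0 g1 t x * calI1 (zf l0 l1 g0 g1 t x)) * thetaf l0 l1 g0 g1 t x) (g0 - g1) (g1 * t)
  rw [mul_zero, zero_add, ← add_mul, sub_add_cancel, smul_eq_mul,
    ← intervalIntegral.integral_const_mul] at hsubst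
  simp_rw [← hsubst, sub_mul_density_eq_occupationDensity l0 l1 hg, xi0_mul_add hg]

end Telegraph

/-- the distribution of Γ(t) started from state 0 (atom of mass `e^{−λ₀t}`
at `γ₀t` plus the absolutely continuous part) has total mass 1. -/
theorem telegraph_distribution_state0_total_mass (l0 l1 g0 g1 t : ℝ)
    (hl0 : 0 < l0) (hl1 : 0 < l1) (hg : g1 < g0) (ht : 0 < t) :
    Real.exp (-(l0 * t)) +
      ∫ x in (g1 * t)..(g0 * t),
        l0 * (calI0 (zf l0 l1 g0 g1 t x) +
              l1 * xi0 g0 g1 t x * calI1 (zf l0 l1 g0 g1 t x)) *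
          thetaf l0 l1 g0 g1 t x
      = 1 := by
  rw [Telegraph.integral_density_eq_integral_occupationDensity l0 l1 hg.ne' t,
    Telegraph.integral_occupationDensity hl0.le hl1.le ht.le]
  ring
end

section
/- Let λ0, λ1 > 0, γ0 > γ1 and t > 0. Then e^{−λ1·t} + ∫_{γ1·t}^{γ0·t} λ1·(ℐ0(z(t,x)) + λ0·ξ1(t,x)·ℐ1(z(t,x)))·θ(t,x) dx = 1. (This says that the distribution of the telegraph particle position Γ(t) started from state 1 — an atom of mass e^{−λ1·t} at x = γ1·t plus the absolutely continuous part with the stated density on (γ1·t, γ0·t) — is a probability distribution.) -/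
open Real Filter MeasureTheory

/-! In the coordinates `u = ξ₀`, `w = ξ₁ = t - u` the density becomes `φ(u, t - u) / (γ₀ - γ₁)`
with `φ(u, w) = λ₁ (ℐ₀(λ₀λ₁uw) + λ₀ w ℐ₁(λ₀λ₁uw)) e^{-λ₀u-λ₁w}`, so the claim is
`∫₀ᵗ φ(u, t - u) du = 1 - e^{-λ₁t}`. Since `ℐ₀' = ℐ₁` and `(z ℐ₁)' = ℐ₀`, the derivative
`ψ = ∂_w φ` is again explicit, and `φ(u, 0) = λ₁ e^{-λ₀u}`. Writing
`φ(u, t - u) = φ(u, 0) + ∫ᵤᵗ ψ(u, s - u) ds` and exchanging the order of integration over the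
triangle `0 ≤ u ≤ s ≤ t` leaves the integrals of `ψ` along the antidiagonals `u + w = s`. There
`ψ(u, s - u)` is the `u`-derivative of `-λ₁ e^{-λ₀u-λ₁(s-u)} ℐ₀(λ₀λ₁u(s-u))`, so each equals
`λ₁e^{-λ₁s} - λ₁e^{-λ₀s}`; the `e^{-λ₀s}` terms cancel against `∫₀ᵗ φ(u, 0) du`. -/

open Set Nat

section PowerSeries

variable {c : ℕ → ℝ}

theorem summable_abs_mul_pow_of_abs_le_inv_factorial (hc : ∀ n, |c n| ≤ (n ! : ℝ)⁻¹)
    (r : ℝ) : Summable fun n => |c n| * r ^ n :=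
  (summable_pow_div_factorial |r|).of_norm_bounded fun n => by
    rw [norm_mul, norm_pow, norm_abs_eq_norm, Real.norm_eq_abs, Real.norm_eq_abs, div_eq_inv_mul]
    gcongr
    exact hc n

theorem summable_mul_pow_of_summable_abs (hc : ∀ r, Summable fun n => |c n| * r ^ n) (z : ℝ) :
    Summable fun n => c n * z ^ n :=
  (hc |z|).of_norm_bounded fun n => by rw [norm_mul, norm_pow, Real.norm_eq_abs, Real.norm_eq_abs]

theorem hasDerivAt_tsum_mul_pow_succ (hc : ∀ r, Summable fun n => |c n| * r ^ n) (z : ℝ) :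
    HasDerivAt (fun y => ∑' n, c n * y ^ (n + 1)) (∑' n, (n + 1) * c n * z ^ n) z := by
  obtain ⟨R, hzR, hR⟩ : ∃ R, |z| < R ∧ 0 < R := ⟨|z| + 1, by linarith, by positivity⟩
  refine hasDerivAt_tsum_of_isPreconnected (g := fun n y => c n * y ^ (n + 1))
    (g' := fun n y => (n + 1) * c n * y ^ n) (hc (2 * R)) Metric.isOpen_ball
    (convex_ball 0 R).isPreconnected (fun n y _ => ?_) (fun n y hy => ?_)
    (Metric.mem_ball_self hR) (by simp) (mem_ball_zero_iff.2 (by simpa using hzR))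
  · simpa [mul_comm, mul_assoc, mul_left_comm] using (hasDerivAt_pow (n + 1) y).const_mul (c n)
  · have hy : |y| ≤ R := (mem_ball_zero_iff.1 hy).le
    have hn : (n + 1 : ℝ) ≤ 2 ^ n := by exact_mod_cast Nat.lt_two_pow_self
    calc ‖(n + 1) * c n * y ^ n‖ = (n + 1) * (|c n| * |y| ^ n) := by
          rw [norm_mul, norm_mul, norm_pow, Real.norm_eq_abs, Real.norm_eq_abs, Real.norm_eq_abs,
            abs_of_nonneg (by positivity : (0 : ℝ) ≤ n + 1)]
          ring
      _ ≤ 2 ^ n * (|c n| * R ^ n) := by gcongr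
      _ = |c n| * (2 * R) ^ n := by ring

end PowerSeries

/-- `calI k z = I_k(2√z) / √z ^ k`. -/
noncomputable def calI (k : ℕ) (z : ℝ) : ℝ := ∑' n, z ^ n / ((n ! : ℝ) * (n + k) !)

theorem calI0_eq_calI_zero : calI0 = calI 0 := by
  ext z
  simp [calI0, calI, sq]

theorem calI1_eq_calI_one : calI1 = calI 1 := rfl

theorem abs_inv_factorial_mul_factorial_le {n m : ℕ} (h : n ≤ m) (k : ℕ) :
    |((m ! : ℝ) * k !)⁻¹| ≤ (n ! : ℝ)⁻¹ := by
  rw [abs_of_nonneg (by positivity)]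
  gcongr
  calc (n ! : ℝ) ≤ m ! := by exact_mod_cast Nat.factorial_le h
    _ ≤ m ! * k ! := le_mul_of_one_le_right (by positivity) (by exact_mod_cast k.factorial_pos)

theorem calI_eq_add_tsum (k : ℕ) (z : ℝ) :
    calI k z = (k ! : ℝ)⁻¹ + ∑' n, ((n + 1) ! * (n + 1 + k) ! : ℝ)⁻¹ * z ^ (n + 1) := by
  have hs := summable_mul_pow_of_summable_abs (summable_abs_mul_pow_of_abs_le_inv_factorial
    fun n => abs_inv_factorial_mul_factorial_le le_rfl (n + k)) z
  simp only [calI, div_eq_inv_mul]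
  rw [hs.tsum_eq_zero_add]
  simp

theorem calI_zero (k : ℕ) : calI k 0 = (k ! : ℝ)⁻¹ := by
  simp [calI_eq_add_tsum]

theorem hasDerivAt_calI (k : ℕ) (z : ℝ) : HasDerivAt (calI k) (calI (k + 1) z) z := by
  have h := (hasDerivAt_tsum_mul_pow_succ (summable_abs_mul_pow_of_abs_le_inv_factorial
    fun n => abs_inv_factorial_mul_factorial_le n.le_succ (n + 1 + k)) z).const_add (k ! : ℝ)⁻¹
  rw [funext (calI_eq_add_tsum k)]
  refine h.congr_deriv (tsum_congr fun n => ?_)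
  rw [show n + 1 + k = n + (k + 1) by omega, Nat.factorial_succ]
  push_cast
  field_simp

@[fun_prop]
theorem continuous_calI (k : ℕ) : Continuous (calI k) :=
  continuous_iff_continuousAt.2 fun z => (hasDerivAt_calI k z).continuousAt

theorem hasDerivAt_mul_calI_one (z : ℝ) : HasDerivAt (fun z => z * calI 1 z) (calI 0 z) z := by
  have h := hasDerivAt_tsum_mul_pow_succ (summable_abs_mul_pow_of_abs_le_inv_factorial
    fun n => abs_inv_factorial_mul_factorial_le le_rfl (n + 1)) z
  have hfun : (fun z => z * calI 1 z) =
      fun y => ∑' n, ((n ! : ℝ) * (n + 1) !)⁻¹ * y ^ (n + 1) := by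
    ext y
    rw [calI, ← tsum_mul_left]
    exact tsum_congr fun n => by ring
  rw [hfun]
  refine h.congr_deriv (tsum_congr fun n => ?_)
  rw [Nat.factorial_succ]
  push_cast [add_zero]
  field_simp

theorem mul_calI_two (z : ℝ) : z * calI 2 z = calI 0 z - calI 1 z := by
  have h := (hasDerivAt_mul_calI_one z).unique ((hasDerivAt_id' z).mul (hasDerivAt_calI 1 z))
  linarith

theorem hasDerivAt_mul_calI_one_comp_mul (a w : ℝ) :
    HasDerivAt (fun w => w * calI 1 (a * w)) (calI 0 (a * w)) w := by
  have h := (hasDerivAt_id' w).mul ((hasDerivAt_calI 1 (a * w)).comp w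
    ((hasDerivAt_id' w).const_mul a))
  refine h.congr_deriv ?_
  simp only [Function.comp_apply]
  linear_combination mul_calI_two (a * w)

section Triangle

variable {E : Type*} [NormedAddCommGroup E] [NormedSpace ℝ E]

theorem intervalIntegral_triangle_swap_of_le {f : ℝ → ℝ → E} (hf : Continuous f.uncurry)
    {a b : ℝ} (hab : a ≤ b) :
    ∫ x in a..b, ∫ y in x..b, f x y = ∫ y in a..b, ∫ x in a..y, f x y := by
  set F : ℝ → ℝ → E := fun x y => if x < y then f x y else 0
  have hF_int : IntegrableOn F.uncurry (uIoc a b ×ˢ uIoc a b) := by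
    have hF : F.uncurry = {p : ℝ × ℝ | p.1 < p.2}.indicator f.uncurry := by
      ext ⟨x, y⟩
      simp [F, indicator_apply]
    have hf_int : IntegrableOn f.uncurry (uIcc a b ×ˢ uIcc a b) :=
      hf.continuousOn.integrableOn_compact (isCompact_uIcc.prod isCompact_uIcc)
    rw [hF]
    exact (hf_int.mono_set (prod_mono uIoc_subset_uIcc uIoc_subset_uIcc)).indicator
      (measurableSet_lt measurable_fst measurable_snd)
  have h_inner_y : ∀ x ∈ uIcc a b, ∫ y in a..b, F x y = ∫ y in x..b, f x y := by
    intro x hx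
    rw [uIcc_of_le hab] at hx
    have hset : Ioc a b ∩ Ioi x = Ioc x b := by
      ext y
      simp only [mem_inter_iff, mem_Ioc, mem_Ioi]
      grind
    rw [intervalIntegral.integral_of_le hab, intervalIntegral.integral_of_le hx.2, ← hset,
      ← setIntegral_indicator measurableSet_Ioi]
    simp [F, indicator_apply]
  have h_inner_x : ∀ y ∈ uIcc a b, ∫ x in a..b, F x y = ∫ x in a..y, f x y := by
    intro y hy
    rw [uIcc_of_le hab] at hy
    have hset : Ioc a b ∩ Iio y = Ioo a y := by
      ext x
      simp only [mem_inter_iff, mem_Ioc, mem_Iio, mem_Ioo]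
      grind
    rw [intervalIntegral.integral_of_le hab, intervalIntegral.integral_of_le hy.1,
      integral_Ioc_eq_integral_Ioo (x := a) (y := y), ← hset,
      ← setIntegral_indicator measurableSet_Iio]
    simp [F, indicator_apply]
  calc ∫ x in a..b, ∫ y in x..b, f x y = ∫ x in a..b, ∫ y in a..b, F x y :=
        intervalIntegral.integral_congr fun x hx => (h_inner_y x hx).symm
    _ = ∫ y in a..b, ∫ x in a..b, F x y := intervalIntegral_intervalIntegral_swap hF_int
    _ = ∫ y in a..b, ∫ x in a..y, f x y := intervalIntegral.integral_congr h_inner_x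

theorem intervalIntegral_triangle_swap {f : ℝ → ℝ → E} (hf : Continuous f.uncurry)
    (a b : ℝ) : ∫ x in a..b, ∫ y in x..b, f x y = ∫ y in a..b, ∫ x in a..y, f x y := by
  rcases le_total a b with hab | hba
  · exact intervalIntegral_triangle_swap_of_le hf hab
  · have h := intervalIntegral_triangle_swap_of_le (f := fun y x => f x y)
      (hf.comp continuous_swap) hba
    simpa only [intervalIntegral.integral_symm b, intervalIntegral.integral_symm _ a,
      intervalIntegral.integral_neg, neg_neg] using h.symm

end Triangle

theorem integral_mul_exp_neg_mul (c t : ℝ) :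
    ∫ s in 0..t, c * exp (-(c * s)) = 1 - exp (-(c * t)) := by
  have hderiv (s : ℝ) : HasDerivAt (fun s => -exp (-(c * s))) (c * exp (-(c * s))) s :=
    (((hasDerivAt_id' s).const_mul c).neg.exp.neg).congr_deriv (by simp [mul_comm])
  rw [intervalIntegral.integral_eq_sub_of_hasDerivAt (fun s _ => hderiv s)
    ((by fun_prop : Continuous fun s => c * exp (-(c * s))).intervalIntegrable _ _)]
  simp
  ring

/-- The absolutely continuous part of the law of `Γ(t)` from state 1, in the coordinates
`u = ξ₀`, `w = ξ₁`; the density in `x` is this divided by `γ₀ - γ₁`. -/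
noncomputable def telegraphDensity (l0 l1 u w : ℝ) : ℝ :=
  l1 * (calI 0 (l0 * l1 * u * w) + l0 * (w * calI 1 (l0 * l1 * u * w))) *
    exp (-(l0 * u) - l1 * w)

noncomputable def telegraphDensityDeriv (l0 l1 u w : ℝ) : ℝ :=
  l1 * ((l0 - l1) * calI 0 (l0 * l1 * u * w) + l0 * l1 * (u - w) * calI 1 (l0 * l1 * u * w)) *
    exp (-(l0 * u) - l1 * w)

section TelegraphDensity

variable (l0 l1 : ℝ)

theorem hasDerivAt_telegraphDensity (u w : ℝ) :
    HasDerivAt (telegraphDensity l0 l1 u) (telegraphDensityDeriv l0 l1 u w) w := by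
  have hI0 := (hasDerivAt_calI 0 (l0 * l1 * u * w)).comp w
    ((hasDerivAt_id' w).const_mul (l0 * l1 * u))
  have hI1 := (hasDerivAt_mul_calI_one_comp_mul (l0 * l1 * u) w).const_mul l0
  have hE := (((hasDerivAt_id' w).const_mul l1).const_sub (-(l0 * u))).exp
  refine (((hI0.add hI1).const_mul l1).mul hE).congr_deriv ?_
  simp only [telegraphDensityDeriv, Pi.add_apply, Function.comp_apply, zero_add]
  ring

theorem telegraphDensity_zero_right (u : ℝ) :
    telegraphDensity l0 l1 u 0 = l1 * exp (-(l0 * u)) := by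
  simp [telegraphDensity, calI_zero]

theorem telegraphDensity_eq_add_integral (u w : ℝ) :
    telegraphDensity l0 l1 u w =
      l1 * exp (-(l0 * u)) + ∫ v in 0..w, telegraphDensityDeriv l0 l1 u v := by
  rw [intervalIntegral.integral_eq_sub_of_hasDerivAt
    (fun v _ => hasDerivAt_telegraphDensity l0 l1 u v)
    ((by unfold telegraphDensityDeriv; fun_prop : Continuous _).intervalIntegrable _ _),
    telegraphDensity_zero_right]
  ring

theorem integral_telegraphDensityDeriv_antidiagonal (s : ℝ) :
    ∫ u in 0..s, telegraphDensityDeriv l0 l1 u (s - u) =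
      l1 * exp (-(l1 * s)) - l1 * exp (-(l0 * s)) := by
  have hderiv (u : ℝ) : HasDerivAt
      (fun u => -(l1 * exp (-(l0 * u) - l1 * (s - u)) * calI 0 (l0 * l1 * u * (s - u))))
      (telegraphDensityDeriv l0 l1 u (s - u)) u := by
    have hz := ((hasDerivAt_id' u).const_mul (l0 * l1)).mul ((hasDerivAt_id' u).const_sub s)
    have hE := (((hasDerivAt_id' u).const_mul l0).neg.sub
      (((hasDerivAt_id' u).const_sub s).const_mul l1)).exp
    refine (((hE.const_mul l1).mul ((hasDerivAt_calI 0 _).comp u hz)).neg).congr_deriv ?_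
    simp only [telegraphDensityDeriv, Pi.neg_apply, Pi.sub_apply, Pi.mul_apply,
      Function.comp_apply, zero_add]
    ring
  rw [intervalIntegral.integral_eq_sub_of_hasDerivAt (fun u _ => hderiv u)
    ((by unfold telegraphDensityDeriv; fun_prop : Continuous _).intervalIntegrable _ _)]
  simp [calI_zero]
  ring

theorem integral_telegraphDensity_antidiagonal (t : ℝ) :
    ∫ u in 0..t, telegraphDensity l0 l1 u (t - u) = 1 - exp (-(l1 * t)) := by
  have hψ : Continuous (fun u s => telegraphDensityDeriv l0 l1 u (s - u)).uncurry := by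
    unfold telegraphDensityDeriv Function.uncurry
    fun_prop
  have key : ∫ u in 0..t, (telegraphDensity l0 l1 u (t - u) - l1 * exp (-(l0 * u))) =
      ∫ s in 0..t, (l1 * exp (-(l1 * s)) - l1 * exp (-(l0 * s))) := by
    calc _ = ∫ u in 0..t, ∫ s in u..t, telegraphDensityDeriv l0 l1 u (s - u) :=
          intervalIntegral.integral_congr fun u _ => by
            rw [telegraphDensity_eq_add_integral, intervalIntegral.integral_comp_sub_right,
              sub_self]
            ring
      _ = ∫ s in 0..t, ∫ u in 0..s, telegraphDensityDeriv l0 l1 u (s - u) :=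
          intervalIntegral_triangle_swap hψ 0 t
      _ = _ := intervalIntegral.integral_congr fun s _ =>
          integral_telegraphDensityDeriv_antidiagonal l0 l1 s
  have hcont : Continuous fun u => telegraphDensity l0 l1 u (t - u) := by
    unfold telegraphDensity
    fun_prop
  rw [intervalIntegral.integral_sub (hcont.intervalIntegrable _ _)
      ((by fun_prop : Continuous _).intervalIntegrable _ _),
    intervalIntegral.integral_sub ((by fun_prop : Continuous _).intervalIntegrable _ _)
      ((by fun_prop : Continuous _).intervalIntegrable _ _), integral_mul_exp_neg_mul] at key
  linarith

end TelegraphDensity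

theorem xi1_eq_sub_xi0 {g0 g1 : ℝ} (hg : g0 - g1 ≠ 0) (t x : ℝ) :
    xi1 g0 g1 t x = t - xi0 g0 g1 t x := by
  simp only [xi0, xi1]
  field_simp
  ring

theorem integral_comp_xi0_div {g0 g1 : ℝ} (hg : g0 - g1 ≠ 0) (f : ℝ → ℝ) (t : ℝ) :
    ∫ x in g1 * t..g0 * t, f (xi0 g0 g1 t x) / (g0 - g1) = ∫ u in 0..t, f u := by
  simp only [xi0]
  rw [intervalIntegral.integral_div,
    intervalIntegral.integral_comp_sub_right (fun y => f (y / (g0 - g1))),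
    intervalIntegral.integral_comp_div _ hg, sub_self, zero_div, smul_eq_mul,
    ← sub_mul, mul_div_cancel_left₀ t hg, mul_div_cancel_left₀ _ hg]

theorem telegraph_distribution_state1_total_mass_general (l0 l1 g0 g1 t : ℝ) (hg : g1 < g0) :
    Real.exp (-(l1 * t)) +
      ∫ x in (g1 * t)..(g0 * t),
        l1 * (calI0 (zf l0 l1 g0 g1 t x) +
              l0 * xi1 g0 g1 t x * calI1 (zf l0 l1 g0 g1 t x)) *
          thetaf l0 l1 g0 g1 t x
      = 1 := by
  have hg' : g0 - g1 ≠ 0 := sub_ne_zero.2 hg.ne'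
  have hintegrand (x : ℝ) :
      l1 * (calI0 (zf l0 l1 g0 g1 t x) + l0 * xi1 g0 g1 t x * calI1 (zf l0 l1 g0 g1 t x)) *
          thetaf l0 l1 g0 g1 t x =
        telegraphDensity l0 l1 (xi0 g0 g1 t x) (t - xi0 g0 g1 t x) / (g0 - g1) := by
    simp only [calI0_eq_calI_zero, calI1_eq_calI_one, zf, thetaf, telegraphDensity,
      ← xi1_eq_sub_xi0 hg']
    ring
  rw [intervalIntegral.integral_congr fun x _ => hintegrand x,
    integral_comp_xi0_div hg' fun u => telegraphDensity l0 l1 u (t - u),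
    integral_telegraphDensity_antidiagonal]
  ring

/-- the distribution of Γ(t) started from state 1 (atom of mass `e^{−λ₁t}`
at `γ₁t` plus the absolutely continuous part) has total mass 1. -/
theorem telegraph_distribution_state1_total_mass (l0 l1 g0 g1 t : ℝ)
    (hl0 : 0 < l0) (hl1 : 0 < l1) (hg : g1 < g0) (ht : 0 < t) :
    Real.exp (-(l1 * t)) +
      ∫ x in (g1 * t)..(g0 * t),
        l1 * (calI0 (zf l0 l1 g0 g1 t x) +
              l0 * xi1 g0 g1 t x * calI1 (zf l0 l1 g0 g1 t x)) *
          thetaf l0 l1 g0 g1 t x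
      = 1 :=
  telegraph_distribution_state1_total_mass_general l0 l1 g0 g1 t hg
end

section
/- Let λ0, λ1 > 0, γ0 > γ1 > 0 and y > 0. Then e^{−λ0·y/γ0} + ∫_{y/γ0}^{y/γ1} λ0·(γ1·ℐ0(z(t,y)) + λ1·γ0·ξ0(t,y)·ℐ1(z(t,y)))·θ(t,y) dt = 1. (This is the statement of Theorem 2.1 that when both velocities are positive the first passage time T(y) through the level y, started from state 0, is almost surely finite and supported on the segment [y/γ0, y/γ1]: its distribution, an atom of mass e^{−λ0·y/γ0} at t = y/γ0 plus the absolutely continuous part with the stated density, has total mass 1.) -/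
open Real Filter MeasureTheory

/-!
The substitution `q = λ₀ ξ₀(t, y)` maps `[y/γ₀, y/γ₁]` onto `[0, P]`, `P = λ₀ y/γ₀`, and
turns the density into a multiple of `reducedDensity μ P q`, `μ = λ₁γ₀/(λ₀γ₁)`, so the claim
becomes `∫₀^P reducedDensity μ P = 1 - e^{-P}`. The Cauchy product of `e^{-μ(P-q)}` with the
Bessel series writes `reducedDensity μ P q` as a power series `∑ μᵏ Gₖ(q)` in `μ` with
`G₀ = e^{-q}`, and for `k ≥ 1` each `Gₖ` is the derivative of a function vanishing at `q = 0`
and `q = P`. Integrating term by term (dominated convergence) leaves `∫₀^P e^{-q} dq`.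
-/

open Finset
open scoped Nat

noncomputable def besselSeries (j : ℕ) (z : ℝ) : ℝ :=
  ∑' n : ℕ, z ^ n / ((n ! : ℝ) * ((n + j)! : ℝ))

lemma calI0_eq_besselSeries : calI0 = besselSeries 0 := by
  funext z
  simp [calI0, besselSeries, sq]

lemma calI1_eq_besselSeries : calI1 = besselSeries 1 := rfl

noncomputable def expBesselCoeff (j k : ℕ) (p : ℝ) : ℝ :=
  ∑ ab ∈ antidiagonal k, (-1) ^ ab.1 * p ^ ab.2 / (ab.1 ! * ab.2 ! * (ab.2 + j)! : ℝ)

lemma expBesselCoeff_zero (j : ℕ) (p : ℝ) : expBesselCoeff j 0 p = (j ! : ℝ)⁻¹ := by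
  simp [expBesselCoeff]

lemma summable_norm_besselSeries_term (j : ℕ) (z : ℝ) :
    Summable fun n : ℕ => ‖z ^ n / ((n ! : ℝ) * ((n + j)! : ℝ))‖ := by
  refine (Real.summable_pow_div_factorial |z|).of_nonneg_of_le (fun _ => norm_nonneg _)
    fun n => ?_
  rw [norm_div, norm_pow, Real.norm_eq_abs, norm_mul, Real.norm_natCast, Real.norm_natCast]
  exact div_le_div_of_nonneg_left (by positivity) (by positivity)
    (le_mul_of_one_le_right (by positivity) (by exact_mod_cast (n + j).factorial_pos))

lemma hasSum_exp_neg_mul_besselSeries (j : ℕ) (x p : ℝ) :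
    HasSum (fun k => x ^ k * expBesselCoeff j k p) (rexp (-x) * besselSeries j (x * p)) := by
  have hexp : Summable fun n : ℕ => ‖(-x) ^ n / (n ! : ℝ)‖ := by
    simpa [norm_div, abs_pow] using Real.summable_pow_div_factorial |x|
  have hbes := summable_norm_besselSeries_term j (x * p)
  rw [Real.exp_eq_exp_ℝ, NormedSpace.exp_eq_tsum_div, besselSeries,
    tsum_mul_tsum_eq_tsum_sum_antidiagonal_of_summable_norm hexp hbes]
  refine (summable_norm_sum_mul_antidiagonal_of_summable_norm hexp hbes).of_norm.hasSum.congr_fun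
    fun k => ?_
  rw [expBesselCoeff, mul_sum]
  refine sum_congr rfl fun ab hab => ?_
  rw [← mem_antidiagonal.mp hab]
  field_simp
  ring

lemma sum_antidiagonal_pow_div_factorial {K : Type*} [Field K] [CharZero K] (x y : K) (n : ℕ) :
    ∑ ab ∈ antidiagonal n, x ^ ab.1 * y ^ ab.2 / (ab.1 ! * ab.2 ! : K) = (x + y) ^ n / n ! := by
  rw [(Commute.all x y).add_pow', sum_div]
  refine sum_congr rfl fun ab hab => ?_
  rw [nsmul_eq_mul, ← mem_antidiagonal.mp hab, Nat.cast_add_choose]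
  have : ((ab.1 + ab.2)! : K) ≠ 0 := Nat.cast_ne_zero.mpr (Nat.factorial_ne_zero _)
  field_simp

lemma sum_antidiagonal_shift_le {M : Type*} [AddCommMonoid M] [PartialOrder M]
    [IsOrderedAddMonoid M] {g : ℕ × ℕ → M} (hg : ∀ ab, 0 ≤ g ab) (j k : ℕ) :
    ∑ ab ∈ antidiagonal k, g (ab.1, ab.2 + j) ≤ ∑ ab ∈ antidiagonal (k + j), g ab := by
  induction j generalizing g with
  | zero => rfl
  | succ j ih =>
    rw [← add_assoc, Nat.sum_antidiagonal_succ']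
    exact (ih (g := fun ab => g (ab.1, ab.2 + 1)) fun _ => hg _).trans
      (le_add_of_nonneg_left (hg _))

lemma abs_pow_mul_expBesselCoeff_le (j k : ℕ) (p : ℝ) :
    |p ^ j * expBesselCoeff j k p| ≤ (1 + |p|) ^ (k + j) / (k + j)! := by
  calc |p ^ j * expBesselCoeff j k p|
      ≤ ∑ ab ∈ antidiagonal k,
          1 ^ ab.1 * |p| ^ (ab.2 + j) / (ab.1 ! * (ab.2 + j)! : ℝ) := by
        rw [expBesselCoeff, mul_sum]
        refine (abs_sum_le_sum_abs _ _).trans (sum_le_sum fun ab _ => ?_)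
        have hb : (1 : ℝ) ≤ ab.2 ! := by exact_mod_cast ab.2.factorial_pos
        simp only [abs_mul, abs_div, abs_pow, abs_neg, abs_one, one_pow, one_mul, Nat.abs_cast]
        rw [pow_add, mul_div_assoc', mul_comm (|p| ^ j)]
        refine div_le_div_of_nonneg_left (by positivity) (by positivity) ?_
        rw [mul_right_comm]
        exact le_mul_of_one_le_right (by positivity) hb
    _ ≤ ∑ ab ∈ antidiagonal (k + j), 1 ^ ab.1 * |p| ^ ab.2 / (ab.1 ! * ab.2 ! : ℝ) :=
        sum_antidiagonal_shift_le (g := fun ab => 1 ^ ab.1 * |p| ^ ab.2 / (ab.1 ! * ab.2 ! : ℝ))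
          (fun _ => by positivity) j k
    _ = (1 + |p|) ^ (k + j) / (k + j)! := sum_antidiagonal_pow_div_factorial 1 |p| (k + j)

lemma continuous_expBesselCoeff (j k : ℕ) : Continuous (expBesselCoeff j k) :=
  continuous_finsetSum _ fun _ _ => by fun_prop

lemma succ_mul_expBesselCoeff_zero_succ (k : ℕ) (p : ℝ) :
    (k + 1 : ℝ) * expBesselCoeff 0 (k + 1) p =
      p * expBesselCoeff 1 k p - expBesselCoeff 0 k p := by
  set f : ℕ × ℕ → ℝ := fun ab => (-1) ^ ab.1 * p ^ ab.2 / (ab.1 ! * ab.2 ! * ab.2 ! : ℝ)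
  have hsplit : (k + 1 : ℝ) * expBesselCoeff 0 (k + 1) p =
      ∑ ab ∈ antidiagonal (k + 1), ab.1 * f ab +
        ∑ ab ∈ antidiagonal (k + 1), ab.2 * f ab := by
    rw [expBesselCoeff, mul_sum, ← sum_add_distrib]
    refine sum_congr rfl fun ab hab => ?_
    show (k + 1 : ℝ) * f ab = ab.1 * f ab + ab.2 * f ab
    rw [← add_mul]
    congr 1
    exact_mod_cast (mem_antidiagonal.mp hab).symm
  have hfirst : ∑ ab ∈ antidiagonal (k + 1), ab.1 * f ab = -expBesselCoeff 0 k p := by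
    rw [Nat.sum_antidiagonal_succ, expBesselCoeff, ← sum_neg_distrib]
    simp only [f, Nat.cast_zero, zero_mul, zero_add, add_zero]
    refine sum_congr rfl fun ab _ => ?_
    rw [Nat.factorial_succ]
    push_cast
    field_simp
    ring
  have hsecond : ∑ ab ∈ antidiagonal (k + 1), ab.2 * f ab = p * expBesselCoeff 1 k p := by
    rw [Nat.sum_antidiagonal_succ', expBesselCoeff, mul_sum]
    simp only [f, Nat.cast_zero, zero_mul, zero_add]
    refine sum_congr rfl fun ab _ => ?_
    rw [Nat.factorial_succ]
    push_cast
    field_simp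
    ring
  rw [hsplit, hfirst, hsecond]
  ring

lemma hasDerivAt_mul_expBesselCoeff_one (k : ℕ) (p : ℝ) :
    HasDerivAt (fun q => q * expBesselCoeff 1 k q) (expBesselCoeff 0 k p) p := by
  have hsum : (fun q => q * expBesselCoeff 1 k q) = fun q => ∑ ab ∈ antidiagonal k,
      (-1) ^ ab.1 * q ^ (ab.2 + 1) / (ab.1 ! * ab.2 ! * (ab.2 + 1)! : ℝ) := by
    funext q
    rw [expBesselCoeff, mul_sum]
    exact sum_congr rfl fun _ _ => by ring
  rw [hsum, expBesselCoeff]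
  refine HasDerivAt.fun_sum fun ab _ => ?_
  refine (((hasDerivAt_pow (ab.2 + 1) p).const_mul ((-1) ^ ab.1)).div_const
    (ab.1 ! * ab.2 ! * (ab.2 + 1)! : ℝ)).congr_deriv ?_
  rw [Nat.factorial_succ, add_zero]
  push_cast
  field_simp

noncomputable def massCoeff (P : ℝ) : ℕ → ℝ → ℝ
  | 0, p => rexp (-p)
  | k + 1, p => rexp (-p) * (P - p) ^ k *
      ((P - p) * expBesselCoeff 0 (k + 1) p + p * expBesselCoeff 1 k p)

lemma continuous_massCoeff (P : ℝ) : ∀ k, Continuous (massCoeff P k)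
  | 0 => show Continuous fun p => rexp (-p) by fun_prop
  | k + 1 => by
    have := continuous_expBesselCoeff 0 (k + 1)
    have := continuous_expBesselCoeff 1 k
    show Continuous fun p => rexp (-p) * (P - p) ^ k *
      ((P - p) * expBesselCoeff 0 (k + 1) p + p * expBesselCoeff 1 k p)
    fun_prop

lemma hasDerivAt_massCoeff_succ_primitive (P : ℝ) (k : ℕ) (p : ℝ) :
    HasDerivAt (fun q => -(rexp (-q) * (P - q) ^ (k + 1) * (q * expBesselCoeff 1 k q)) / (k + 1))
      (massCoeff P (k + 1) p) p := by
  have hexp : HasDerivAt (fun q => rexp (-q)) (-rexp (-p)) p := by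
    simpa using (hasDerivAt_id p).neg.exp
  have hpow : HasDerivAt (fun q => (P - q) ^ (k + 1)) (-((k + 1) * (P - p) ^ k)) p := by
    simpa using ((hasDerivAt_id p).const_sub P).fun_pow (k + 1)
  refine (((hexp.mul hpow).mul (hasDerivAt_mul_expBesselCoeff_one k p)).neg.div_const
    _).congr_deriv ?_
  have hrec := succ_mul_expBesselCoeff_zero_succ k p
  simp only [Pi.mul_apply]
  rw [massCoeff, div_eq_iff (by positivity)]
  linear_combination (-(rexp (-p) * (P - p) ^ (k + 1))) * hrec

lemma integral_massCoeff_zero (P : ℝ) : ∫ p in 0..P, massCoeff P 0 p = 1 - rexp (-P) := by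
  simp [massCoeff, intervalIntegral.integral_comp_neg fun x => rexp x]

lemma integral_massCoeff_succ (P : ℝ) (k : ℕ) : ∫ p in 0..P, massCoeff P (k + 1) p = 0 := by
  rw [intervalIntegral.integral_eq_sub_of_hasDerivAt
    (fun p _ => hasDerivAt_massCoeff_succ_primitive P k p)
    ((continuous_massCoeff P (k + 1)).intervalIntegrable 0 P)]
  simp

lemma abs_massCoeff_le (P : ℝ) (k : ℕ) {p : ℝ} (hp : p ∈ Set.uIcc 0 P) :
    |massCoeff P k p| ≤ rexp |P| * ((1 + |P|) ^ 2) ^ k / k ! := by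
  have hpP : |p| ≤ |P| := by simpa using Set.abs_sub_left_of_mem_uIcc hp
  have hPp : |P - p| ≤ |P| := by simpa using Set.abs_sub_right_of_mem_uIcc hp
  have hexp : rexp (-p) ≤ rexp |P| := exp_le_exp.mpr ((neg_le_abs p).trans hpP)
  cases k with
  | zero => simpa [massCoeff] using hexp
  | succ k =>
    set F := (1 + |P|) ^ (k + 1) / (k + 1)!
    have hF : (1 + |p|) ^ (k + 1) / (k + 1)! ≤ F := by simp only [F]; gcongr
    have h0 : |expBesselCoeff 0 (k + 1) p| ≤ F := by
      have := abs_pow_mul_expBesselCoeff_le 0 (k + 1) p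
      simp only [pow_zero, one_mul, add_zero] at this
      exact this.trans hF
    have h1 : |p * expBesselCoeff 1 k p| ≤ F := by
      have := abs_pow_mul_expBesselCoeff_le 1 k p
      rw [pow_one] at this
      exact this.trans hF
    calc |massCoeff P (k + 1) p|
        = rexp (-p) * |P - p| ^ k *
            |(P - p) * expBesselCoeff 0 (k + 1) p + p * expBesselCoeff 1 k p| := by
          rw [massCoeff, abs_mul, abs_mul, abs_pow, abs_of_pos (exp_pos _)]
      _ ≤ rexp |P| * |P| ^ k * (|P| * F + F) := by
          gcongr
          refine (abs_add_le _ _).trans (add_le_add ?_ h1)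
          rw [abs_mul]
          gcongr
      _ = rexp |P| * (|P| ^ k * (1 + |P|) ^ (k + 2)) / (k + 1)! := by
          simp only [F]
          ring
      _ ≤ rexp |P| * ((1 + |P|) ^ 2) ^ (k + 1) / (k + 1)! := by
          gcongr
          calc |P| ^ k * (1 + |P|) ^ (k + 2) ≤ (1 + |P|) ^ k * (1 + |P|) ^ (k + 2) := by
                gcongr
                linarith
            _ = ((1 + |P|) ^ 2) ^ (k + 1) := by rw [← pow_mul, ← pow_add]; ring_nf

noncomputable def reducedDensity (μ P q : ℝ) : ℝ :=
  rexp (-q - μ * (P - q)) * (calI0 (μ * q * (P - q)) + μ * q * calI1 (μ * q * (P - q)))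

lemma hasSum_pow_mul_massCoeff (μ P p : ℝ) :
    HasSum (fun k => μ ^ k * massCoeff P k p) (reducedDensity μ P p) := by
  set x := μ * (P - p)
  have h0 : HasSum (fun k => x ^ (k + 1) * expBesselCoeff 0 (k + 1) p)
      (rexp (-x) * besselSeries 0 (x * p) - 1) := by
    simpa [expBesselCoeff_zero] using
      (hasSum_nat_add_iff' 1).mpr (hasSum_exp_neg_mul_besselSeries 0 x p)
  have h1 := (hasSum_exp_neg_mul_besselSeries 1 x p).mul_left (μ * p)
  have hterm : (fun k => μ ^ (k + 1) * massCoeff P (k + 1) p) = fun k => rexp (-p) *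
      (x ^ (k + 1) * expBesselCoeff 0 (k + 1) p + μ * p * (x ^ k * expBesselCoeff 1 k p)) := by
    funext k
    simp only [massCoeff, x, mul_pow]
    ring
  have hval : reducedDensity μ P p - rexp (-p) = rexp (-p) *
      (rexp (-x) * besselSeries 0 (x * p) - 1 + μ * p * (rexp (-x) * besselSeries 1 (x * p))) := by
    have hexp : rexp (-p - μ * (P - p)) = rexp (-p) * rexp (-x) := by
      rw [sub_eq_add_neg, Real.exp_add]
    have harg : μ * p * (P - p) = x * p := by ring
    rw [reducedDensity, calI0_eq_besselSeries, calI1_eq_besselSeries, harg, hexp]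
    ring
  have htail : HasSum (fun k => μ ^ (k + 1) * massCoeff P (k + 1) p)
      (reducedDensity μ P p - rexp (-p)) := by
    rw [hterm, hval]
    exact (h0.add h1).mul_left _
  simpa [massCoeff] using htail.zero_add (f := fun k => μ ^ k * massCoeff P k p)

lemma integral_reducedDensity (μ P : ℝ) :
    ∫ q in 0..P, reducedDensity μ P q = 1 - rexp (-P) := by
  have hterms : HasSum (fun k => ∫ p in 0..P, μ ^ k * massCoeff P k p) (1 - rexp (-P)) := by
    convert hasSum_single 0 fun k hk => ?_ using 1
    · simp [integral_massCoeff_zero]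
    · obtain ⟨k, rfl⟩ := Nat.exists_eq_succ_of_ne_zero hk
      rw [intervalIntegral.integral_const_mul, integral_massCoeff_succ, mul_zero]
  refine (intervalIntegral.hasSum_integral_of_dominated_convergence
    (fun k _ => |μ| ^ k * (rexp |P| * ((1 + |P|) ^ 2) ^ k / k !))
    (fun k => ((continuous_massCoeff P k).const_mul _).aestronglyMeasurable)
    (fun k => ae_of_all _ fun p hp => ?_) (ae_of_all _ fun _ _ => ?_) intervalIntegrable_const
    (ae_of_all _ fun p _ => hasSum_pow_mul_massCoeff μ P p)).unique hterms
  · rw [norm_mul, norm_pow, Real.norm_eq_abs]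
    gcongr
    exact abs_massCoeff_le P k (Set.uIoc_subset_uIcc hp)
  · refine ((Real.summable_pow_div_factorial (|μ| * (1 + |P|) ^ 2)).mul_left (rexp |P|)).congr
      fun k => ?_
    rw [mul_pow]
    ring

lemma density_eq_reducedDensity (l0 l1 g0 g1 y t : ℝ) (hl0 : l0 ≠ 0) (hg0 : g0 ≠ 0)
    (hg1 : g1 ≠ 0) (hgap : g0 - g1 ≠ 0) :
    l0 * (g1 * calI0 (zf l0 l1 g0 g1 t y) +
        l1 * g0 * xi0 g0 g1 t y * calI1 (zf l0 l1 g0 g1 t y)) * thetaf l0 l1 g0 g1 t y =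
      l0 * g1 / (g0 - g1) *
        reducedDensity (l1 * g0 / (l0 * g1)) (l0 * y / g0) (l0 * xi0 g0 g1 t y) := by
  have hz : l1 * g0 / (l0 * g1) * (l0 * xi0 g0 g1 t y) * (l0 * y / g0 - l0 * xi0 g0 g1 t y) =
      zf l0 l1 g0 g1 t y := by
    simp only [zf, xi0, xi1]
    field_simp
    ring
  have hexp : -(l0 * xi0 g0 g1 t y) - l1 * g0 / (l0 * g1) * (l0 * y / g0 - l0 * xi0 g0 g1 t y) =
      -(l0 * xi0 g0 g1 t y) - l1 * xi1 g0 g1 t y := by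
    simp only [xi0, xi1]
    field_simp
    ring
  rw [reducedDensity, hz, hexp, thetaf]
  field_simp

theorem fpt_state0_total_mass_positive_velocities_general (l0 l1 g0 g1 y : ℝ)
    (hl0 : 0 < l0) (hg : g1 < g0) (hg1 : 0 < g1) :
    Real.exp (-(l0 * y / g0)) +
      ∫ t in (y / g0)..(y / g1),
        l0 * (g1 * calI0 (zf l0 l1 g0 g1 t y) +
              l1 * g0 * xi0 g0 g1 t y * calI1 (zf l0 l1 g0 g1 t y)) *
          thetaf l0 l1 g0 g1 t y
      = 1 := by
  have hg0 : 0 < g0 := hg1.trans hg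
  have hgap : 0 < g0 - g1 := sub_pos.mpr hg
  set c := l0 * g1 / (g0 - g1)
  have hc : c ≠ 0 := by positivity
  have hsub : ∀ t, l0 * xi0 g0 g1 t y = l0 * y / (g0 - g1) - c * t := fun t => by
    simp only [xi0, c]
    ring
  simp only [density_eq_reducedDensity l0 l1 g0 g1 y _ hl0.ne' hg0.ne' hg1.ne' hgap.ne', hsub,
    intervalIntegral.integral_const_mul, intervalIntegral.integral_comp_sub_mul _ hc]
  have hlower : l0 * y / (g0 - g1) - c * (y / g1) = 0 := by
    simp only [c]
    field_simp
    ring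
  have hupper : l0 * y / (g0 - g1) - c * (y / g0) = l0 * y / g0 := by
    simp only [c]
    field_simp
  rw [hlower, hupper, integral_reducedDensity, smul_eq_mul, mul_inv_cancel_left₀ hc]
  ring

/-- with both velocities positive, the first passage time through `y > 0`
started from state 0 (atom of mass `e^{−λ₀y/γ₀}` at `y/γ₀` plus the absolutely continuous
part supported on `[y/γ₀, y/γ₁]`) has total mass 1. -/
theorem fpt_state0_total_mass_positive_velocities (l0 l1 g0 g1 y : ℝ)
    (hl0 : 0 < l0) (hl1 : 0 < l1) (hg : g1 < g0) (hg1 : 0 < g1) (hy : 0 < y) :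
    Real.exp (-(l0 * y / g0)) +
      ∫ t in (y / g0)..(y / g1),
        l0 * (g1 * calI0 (zf l0 l1 g0 g1 t y) +
              l1 * g0 * xi0 g0 g1 t y * calI1 (zf l0 l1 g0 g1 t y)) *
          thetaf l0 l1 g0 g1 t y
      = 1 :=
  fpt_state0_total_mass_positive_velocities_general l0 l1 g0 g1 y hl0 hg hg1
end

section
/- Let λ0, λ1 > 0, γ0 > γ1 > 0 and y > 0. Then e^{−λ1·y/γ1} + ∫_{y/γ0}^{y/γ1} λ1·(γ0·ℐ0(z(t,y)) + λ0·γ1·ξ1(t,y)·ℐ1(z(t,y)))·θ(t,y) dt = 1. (This is the statement of Theorem 2.1 that when both velocities are positive the first passage time T(y) through the level y, started from state 1, is almost surely finite and supported on the segment [y/γ0, y/γ1]: its distribution, an atom of mass e^{−λ1·y/γ1} at t = y/γ1 plus the absolutely continuous part with the stated density, has total mass 1.) -/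
open Real Filter MeasureTheory

/-!
Put `a(t) = λ₁ ξ₁(t,y)` and `b(t) = λ₀ ξ₀(t,y)`. On `[y/γ₀, y/γ₁]` both are nonnegative, `a` grows
at speed `α = λ₁γ₀/(γ₀-γ₁)` from `0` to `λ₁y/γ₁` and `b` falls at speed `β = λ₀γ₁/(γ₀-γ₁)` to `0`.
For independent Poisson variables `N_a`, `N_b` of means `a`, `b`, the function
`F(t) = P(N_b < N_a) = ∑ₙ P(N_a = n+1) P(N_b ≤ n)` is an antiderivative of the density:
differentiating termwise and summing by parts leaves `α ∑ₙ P(N_a = n) P(N_b = n) +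
β ∑ₙ P(N_a = n+1) P(N_b = n) = e^{-a-b} (α ℐ₀(ab) + β a ℐ₁(ab))`. Since `a` stays bounded on the
segment, dominated convergence lets the sum pass through the integral, which is therefore
`F(y/γ₁) - F(y/γ₀) = P(N_{λ₁y/γ₁} ≥ 1) - 0 = 1 - e^{-λ₁y/γ₁}`.
-/

open Finset Nat

noncomputable def poissonWeight (x : ℝ) (n : ℕ) : ℝ := x ^ n / n ! * exp (-x)

/-- `P(N_x < m)`, with a strict inequality, for `N_x` Poisson of mean `x`. -/
noncomputable def poissonCDF (x : ℝ) (m : ℕ) : ℝ := ∑ k ∈ range m, poissonWeight x k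

theorem hasSum_poissonWeight (x : ℝ) : HasSum (poissonWeight x) 1 := by
  have h := (NormedSpace.expSeries_div_hasSum_exp x).mul_right (exp (-x))
  rwa [← Real.exp_eq_exp_ℝ, ← Real.exp_add, add_neg_cancel, Real.exp_zero] at h

theorem poissonCDF_succ_sub (x : ℝ) (m : ℕ) :
    poissonCDF x (m + 1) - poissonCDF x m = poissonWeight x m := by
  rw [poissonCDF, poissonCDF, sum_range_succ, add_sub_cancel_left]

theorem poissonWeight_zero_rate_succ (n : ℕ) : poissonWeight 0 (n + 1) = 0 := by
  simp [poissonWeight]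

theorem poissonCDF_zero_rate_succ (m : ℕ) : poissonCDF 0 (m + 1) = 1 := by
  rw [poissonCDF, sum_range_succ', sum_eq_zero fun k _ => poissonWeight_zero_rate_succ k]
  simp [poissonWeight]

@[fun_prop]
theorem continuous_poissonWeight (n : ℕ) : Continuous fun x => poissonWeight x n := by
  unfold poissonWeight
  fun_prop

@[fun_prop]
theorem continuous_poissonCDF (m : ℕ) : Continuous fun x => poissonCDF x m := by
  unfold poissonCDF
  fun_prop

theorem hasDerivAt_poissonWeight_zero (x : ℝ) :
    HasDerivAt (fun x => poissonWeight x 0) (-poissonWeight x 0) x := by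
  simpa [poissonWeight] using (hasDerivAt_neg x).exp

theorem hasDerivAt_poissonWeight_succ (x : ℝ) (n : ℕ) :
    HasDerivAt (fun x => poissonWeight x (n + 1))
      (poissonWeight x n - poissonWeight x (n + 1)) x := by
  refine (((hasDerivAt_pow (n + 1) x).div_const ((n + 1)! : ℝ)).mul
    (hasDerivAt_neg x).exp).congr_deriv ?_
  simp only [poissonWeight, factorial_succ, cast_mul, cast_succ, add_tsub_cancel_right]
  field_simp
  ring

theorem hasDerivAt_poissonCDF_succ (x : ℝ) (m : ℕ) :
    HasDerivAt (fun x => poissonCDF x (m + 1)) (-poissonWeight x m) x := by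
  induction m with
  | zero => simpa [poissonCDF] using hasDerivAt_poissonWeight_zero x
  | succ m ih =>
    have h := ih.fun_add (hasDerivAt_poissonWeight_succ x m)
    simp only [poissonCDF, ← sum_range_succ] at h
    exact h.congr_deriv (by ring)

theorem abs_poissonWeight_le (x : ℝ) (n : ℕ) : |poissonWeight x n| ≤ |x| ^ n / n ! * exp (-x) := by
  rw [poissonWeight, abs_mul, abs_div, abs_pow, Nat.abs_cast, abs_of_pos (exp_pos _)]

theorem abs_poissonCDF_le (x : ℝ) (m : ℕ) : |poissonCDF x m| ≤ exp (|x| - x) := by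
  calc |poissonCDF x m| ≤ ∑ k ∈ range m, |x| ^ k / k ! * exp (-x) :=
        (abs_sum_le_sum_abs _ _).trans (sum_le_sum fun k _ => abs_poissonWeight_le x k)
    _ = (∑ k ∈ range m, |x| ^ k / k !) * exp (-x) := by rw [sum_mul]
    _ ≤ exp |x| * exp (-x) := by gcongr; exact sum_le_exp_of_nonneg (abs_nonneg x) m
    _ = exp (|x| - x) := by rw [← Real.exp_add, sub_eq_add_neg]

theorem poissonWeight_mul_poissonWeight (a b : ℝ) (n : ℕ) :
    poissonWeight a n * poissonWeight b n = exp (-(a + b)) * ((a * b) ^ n / (n ! : ℝ) ^ 2) := by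
  rw [poissonWeight, poissonWeight, mul_pow, neg_add, Real.exp_add]
  ring

theorem poissonWeight_succ_mul_poissonWeight (a b : ℝ) (n : ℕ) :
    poissonWeight a (n + 1) * poissonWeight b n =
      exp (-(a + b)) * a * ((a * b) ^ n / ((n ! : ℝ) * (n + 1)!)) := by
  rw [poissonWeight, poissonWeight, mul_pow, neg_add, Real.exp_add, pow_succ]
  ring

theorem hasSum_calI0 (z : ℝ) : HasSum (fun n : ℕ => z ^ n / (n ! : ℝ) ^ 2) (calI0 z) := by
  refine Summable.hasSum (.of_norm_bounded (Real.summable_pow_div_factorial |z|) fun n => ?_)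
  rw [norm_div, norm_pow, Real.norm_eq_abs, norm_pow, Real.norm_natCast]
  have : (1 : ℝ) ≤ n ! := mod_cast n.factorial_pos
  gcongr
  nlinarith

theorem hasSum_calI1 (z : ℝ) :
    HasSum (fun n : ℕ => z ^ n / ((n ! : ℝ) * (n + 1)!)) (calI1 z) := by
  refine Summable.hasSum (.of_norm_bounded (Real.summable_pow_div_factorial |z|) fun n => ?_)
  rw [norm_div, norm_pow, Real.norm_eq_abs, norm_mul, Real.norm_natCast, Real.norm_natCast]
  have : (1 : ℝ) ≤ (n + 1)! := mod_cast (n + 1).factorial_pos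
  gcongr
  nlinarith [(n !).cast_nonneg (α := ℝ)]

theorem hasSum_poissonWeight_mul_poissonWeight (a b : ℝ) :
    HasSum (fun n => poissonWeight a n * poissonWeight b n) (exp (-(a + b)) * calI0 (a * b)) := by
  simpa only [poissonWeight_mul_poissonWeight] using (hasSum_calI0 (a * b)).mul_left _

theorem hasSum_poissonWeight_succ_mul_poissonWeight (a b : ℝ) :
    HasSum (fun n => poissonWeight a (n + 1) * poissonWeight b n)
      (exp (-(a + b)) * a * calI1 (a * b)) := by
  simpa only [poissonWeight_succ_mul_poissonWeight] using (hasSum_calI1 (a * b)).mul_left _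

theorem summable_poissonWeight_mul_of_abs_le {c : ℕ → ℝ} {C : ℝ} (a : ℝ) (hc : ∀ n, |c n| ≤ C) :
    Summable fun n => poissonWeight a n * c n :=
  .of_norm_bounded ((hasSum_poissonWeight a).summable.abs.mul_right C) fun n => by
    rw [Real.norm_eq_abs, abs_mul]
    exact mul_le_mul_of_nonneg_left (hc n) (abs_nonneg _)

theorem HasSum.sub_mul_succ_of_mul_sub {u v : ℕ → ℝ} {s : ℝ} (hv : v 0 = 0)
    (hs : HasSum (fun n => u n * (v (n + 1) - v n)) s) (huv : Summable fun n => u n * v n) :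
    HasSum (fun n => (u n - u (n + 1)) * v (n + 1)) s := by
  have hshift := (hasSum_nat_add_iff' 1).2 huv.hasSum
  simp only [sum_range_one, hv, mul_zero, sub_zero] at hshift
  convert hs.add (huv.hasSum.sub hshift) using 1
  · ext n; ring
  · ring

theorem hasSum_sub_poissonWeight_mul_poissonCDF (a b : ℝ) :
    HasSum (fun n => (poissonWeight a n - poissonWeight a (n + 1)) * poissonCDF b (n + 1))
      (exp (-(a + b)) * calI0 (a * b)) :=
  HasSum.sub_mul_succ_of_mul_sub (by simp [poissonCDF])
    (by simpa only [poissonCDF_succ_sub] using hasSum_poissonWeight_mul_poissonWeight a b)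
    (summable_poissonWeight_mul_of_abs_le a (abs_poissonCDF_le b))

theorem abs_poissonWeight_le_exp (x : ℝ) (n : ℕ) : |poissonWeight x n| ≤ exp (|x| - x) := by
  calc |poissonWeight x n| ≤ |x| ^ n / n ! * exp (-x) := abs_poissonWeight_le x n
    _ ≤ exp |x| * exp (-x) := by gcongr; exact pow_div_factorial_le_exp _ (abs_nonneg x) n
    _ = exp (|x| - x) := by rw [← Real.exp_add, sub_eq_add_neg]

theorem abs_poissonWeight_le_pow_div_factorial {x A : ℝ} (hx : 0 ≤ x) (hxA : x ≤ A) (n : ℕ) :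
    |poissonWeight x n| ≤ A ^ n / n ! := by
  have hA : 0 ≤ A := hx.trans hxA
  calc |poissonWeight x n| ≤ |x| ^ n / n ! * exp (-x) := abs_poissonWeight_le x n
    _ ≤ A ^ n / n ! * 1 := by
      rw [abs_of_nonneg hx]
      gcongr
      exact exp_le_one_iff.2 (neg_nonpos.2 hx)
    _ = A ^ n / n ! := mul_one _

/-- For independent Poisson variables `N_a`, `N_b` of means `a`, `b`, the sum over `n` of these
terms is `P(N_b < N_a)`. -/
noncomputable def poissonRaceTerm (a b : ℝ) (n : ℕ) : ℝ :=
  poissonWeight a (n + 1) * poissonCDF b (n + 1)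

noncomputable def poissonRaceTermDeriv (α β a b : ℝ) (n : ℕ) : ℝ :=
  α * ((poissonWeight a n - poissonWeight a (n + 1)) * poissonCDF b (n + 1)) +
    β * (poissonWeight a (n + 1) * poissonWeight b n)

theorem hasDerivAt_poissonRaceTerm {f g : ℝ → ℝ} {α β t : ℝ} (hf : HasDerivAt f α t)
    (hg : HasDerivAt g (-β) t) (n : ℕ) :
    HasDerivAt (fun t => poissonRaceTerm (f t) (g t) n)
      (poissonRaceTermDeriv α β (f t) (g t) n) t := by
  have hP := (hasDerivAt_poissonWeight_succ (f t) n).comp t hf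
  have hQ := (hasDerivAt_poissonCDF_succ (g t) n).comp t hg
  exact (hP.mul hQ).congr_deriv (by simp only [poissonRaceTermDeriv, Function.comp_apply]; ring)

theorem hasSum_poissonRaceTermDeriv (α β a b : ℝ) :
    HasSum (fun n => poissonRaceTermDeriv α β a b n)
      (exp (-(a + b)) * (α * calI0 (a * b) + β * a * calI1 (a * b))) := by
  rw [show exp (-(a + b)) * (α * calI0 (a * b) + β * a * calI1 (a * b)) =
    α * (exp (-(a + b)) * calI0 (a * b)) + β * (exp (-(a + b)) * a * calI1 (a * b)) by ring]
  exact ((hasSum_sub_poissonWeight_mul_poissonCDF a b).mul_left α).add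
    ((hasSum_poissonWeight_succ_mul_poissonWeight a b).mul_left β)

theorem abs_poissonRaceTermDeriv_le {α β a b A : ℝ} (ha : 0 ≤ a) (haA : a ≤ A) (hb : 0 ≤ b)
    (n : ℕ) :
    |poissonRaceTermDeriv α β a b n| ≤ (|α| + |β|) * (A ^ n / n ! + A ^ (n + 1) / (n + 1)!) := by
  have hA : 0 ≤ A := ha.trans haA
  have hQ : |poissonCDF b (n + 1)| ≤ 1 := by
    simpa [abs_of_nonneg hb] using abs_poissonCDF_le b (n + 1)
  have hP : |poissonWeight b n| ≤ 1 := by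
    simpa [abs_of_nonneg hb] using abs_poissonWeight_le_exp b n
  have hPn := abs_poissonWeight_le_pow_div_factorial ha haA n
  have hPn1 := abs_poissonWeight_le_pow_div_factorial ha haA (n + 1)
  have hX : |(poissonWeight a n - poissonWeight a (n + 1)) * poissonCDF b (n + 1)| ≤
      A ^ n / n ! + A ^ (n + 1) / (n + 1)! := by
    rw [abs_mul]
    calc _ ≤ (|poissonWeight a n| + |poissonWeight a (n + 1)|) * 1 := by
          gcongr; exact abs_sub _ _
      _ ≤ _ := by rw [mul_one]; gcongr
  have hY : |poissonWeight a (n + 1) * poissonWeight b n| ≤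
      A ^ n / n ! + A ^ (n + 1) / (n + 1)! := by
    rw [abs_mul]
    calc _ ≤ A ^ (n + 1) / (n + 1)! * 1 := by gcongr
      _ ≤ _ := by rw [mul_one]; exact le_add_of_nonneg_left (by positivity)
  calc |poissonRaceTermDeriv α β a b n|
      ≤ |α| * |(poissonWeight a n - poissonWeight a (n + 1)) * poissonCDF b (n + 1)| +
          |β| * |poissonWeight a (n + 1) * poissonWeight b n| := by
        rw [poissonRaceTermDeriv, ← abs_mul, ← abs_mul]; exact abs_add_le _ _
    _ ≤ _ := by rw [add_mul]; gcongr

theorem hasSum_integral_poissonRaceTermDeriv {f g : ℝ → ℝ} {α β s t A : ℝ} (hst : s ≤ t)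
    (hf : ∀ τ, HasDerivAt f α τ) (hg : ∀ τ, HasDerivAt g (-β) τ)
    (hf_mem : ∀ τ ∈ Set.Icc s t, 0 ≤ f τ ∧ f τ ≤ A) (hg_nonneg : ∀ τ ∈ Set.Icc s t, 0 ≤ g τ) :
    HasSum (fun n => poissonRaceTerm (f t) (g t) n - poissonRaceTerm (f s) (g s) n)
      (∫ τ in s..t, exp (-(f τ + g τ)) *
        (α * calI0 (f τ * g τ) + β * f τ * calI1 (f τ * g τ))) := by
  have hfc : Continuous f := continuous_iff_continuousAt.2 fun τ => (hf τ).continuousAt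
  have hgc : Continuous g := continuous_iff_continuousAt.2 fun τ => (hg τ).continuousAt
  have hcont (n : ℕ) : Continuous fun τ => poissonRaceTermDeriv α β (f τ) (g τ) n := by
    unfold poissonRaceTermDeriv; fun_prop
  have hFTC (n : ℕ) : ∫ τ in s..t, poissonRaceTermDeriv α β (f τ) (g τ) n =
      poissonRaceTerm (f t) (g t) n - poissonRaceTerm (f s) (g s) n :=
    intervalIntegral.integral_eq_sub_of_hasDerivAt
      (fun τ _ => hasDerivAt_poissonRaceTerm (hf τ) (hg τ) n) ((hcont n).intervalIntegrable _ _)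
  have hbound : Summable fun n : ℕ => (|α| + |β|) * (A ^ n / n ! + A ^ (n + 1) / (n + 1)!) :=
    ((Real.summable_pow_div_factorial A).add
      ((summable_nat_add_iff 1).2 (Real.summable_pow_div_factorial A))).mul_left _
  simp only [← hFTC]
  refine intervalIntegral.hasSum_integral_of_dominated_convergence _
    (fun n => (hcont n).aestronglyMeasurable) (fun n => ae_of_all _ fun τ hτ => ?_)
    (ae_of_all _ fun _ _ => hbound) intervalIntegrable_const
    (ae_of_all _ fun τ _ => hasSum_poissonRaceTermDeriv α β (f τ) (g τ))
  have hτ' : τ ∈ Set.Icc s t := Set.Ioc_subset_Icc_self (Set.uIoc_of_le hst ▸ hτ)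
  exact abs_poissonRaceTermDeriv_le (hf_mem τ hτ').1 (hf_mem τ hτ').2 (hg_nonneg τ hτ') n

theorem hasSum_poissonRaceTerm_zero_right (a : ℝ) :
    HasSum (fun n => poissonRaceTerm a 0 n) (1 - exp (-a)) := by
  have h := (hasSum_nat_add_iff' 1).2 (hasSum_poissonWeight a)
  simpa [poissonRaceTerm, poissonCDF_zero_rate_succ, poissonWeight] using h

theorem poissonRaceTerm_zero_left (b : ℝ) (n : ℕ) : poissonRaceTerm 0 b n = 0 := by
  rw [poissonRaceTerm, poissonWeight_zero_rate_succ, zero_mul]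

section Xi

variable {g0 g1 : ℝ}

theorem xi0_add_xi1 (hg : g0 ≠ g1) (t x : ℝ) : xi0 g0 g1 t x + xi1 g0 g1 t x = t := by
  rw [xi0, xi1, ← add_div, div_eq_iff (sub_ne_zero.2 hg)]
  ring

theorem hasDerivAt_xi0 (t x : ℝ) : HasDerivAt (fun t => xi0 g0 g1 t x) (-(g1 / (g0 - g1))) t := by
  simpa [xi0, neg_div] using (((hasDerivAt_id t).const_mul g1).const_sub x).div_const (g0 - g1)

theorem hasDerivAt_xi1 (t x : ℝ) : HasDerivAt (fun t => xi1 g0 g1 t x) (g0 / (g0 - g1)) t := by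
  simpa [xi1] using (((hasDerivAt_id t).const_mul g0).sub_const x).div_const (g0 - g1)

theorem xi0_nonneg (hg : g1 < g0) (hg1 : 0 < g1) {t x : ℝ} (ht : t ≤ x / g1) :
    0 ≤ xi0 g0 g1 t x := by
  rw [le_div_iff₀ hg1] at ht
  exact div_nonneg (by linarith) (sub_pos.2 hg).le

theorem xi1_nonneg (hg : g1 < g0) (hg0 : 0 < g0) {t x : ℝ} (ht : x / g0 ≤ t) :
    0 ≤ xi1 g0 g1 t x := by
  rw [div_le_iff₀ hg0] at ht
  exact div_nonneg (by linarith) (sub_pos.2 hg).le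

theorem xi0_div_eq_zero (hg1 : g1 ≠ 0) (x : ℝ) : xi0 g0 g1 (x / g1) x = 0 := by
  rw [xi0, mul_div_cancel₀ x hg1, sub_self, zero_div]

theorem xi1_div_eq_zero (hg0 : g0 ≠ 0) (x : ℝ) : xi1 g0 g1 (x / g0) x = 0 := by
  rw [xi1, mul_div_cancel₀ x hg0, sub_self, zero_div]

end Xi

theorem fpt_density_eq (l0 l1 g0 g1 t x : ℝ) :
    l1 * (g0 * calI0 (zf l0 l1 g0 g1 t x) +
        l0 * g1 * xi1 g0 g1 t x * calI1 (zf l0 l1 g0 g1 t x)) * thetaf l0 l1 g0 g1 t x =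
      exp (-(l1 * xi1 g0 g1 t x + l0 * xi0 g0 g1 t x)) *
        (l1 * (g0 / (g0 - g1)) * calI0 (l1 * xi1 g0 g1 t x * (l0 * xi0 g0 g1 t x)) +
          l0 * (g1 / (g0 - g1)) * (l1 * xi1 g0 g1 t x) *
            calI1 (l1 * xi1 g0 g1 t x * (l0 * xi0 g0 g1 t x))) := by
  have hz : zf l0 l1 g0 g1 t x = l1 * xi1 g0 g1 t x * (l0 * xi0 g0 g1 t x) := by
    rw [zf]; ring
  rw [thetaf, hz, show -(l0 * xi0 g0 g1 t x) - l1 * xi1 g0 g1 t x =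
    -(l1 * xi1 g0 g1 t x + l0 * xi0 g0 g1 t x) by ring]
  ring

/-- with both velocities positive, the first passage time through `y > 0`
started from state 1 (atom of mass `e^{−λ₁y/γ₁}` at `y/γ₁` plus the absolutely continuous
part supported on `[y/γ₀, y/γ₁]`) has total mass 1. -/
theorem fpt_state1_total_mass_positive_velocities (l0 l1 g0 g1 y : ℝ)
    (hl0 : 0 < l0) (hl1 : 0 < l1) (hg : g1 < g0) (hg1 : 0 < g1) (hy : 0 < y) :
    Real.exp (-(l1 * y / g1)) +
      ∫ t in (y / g0)..(y / g1),
        l1 * (g0 * calI0 (zf l0 l1 g0 g1 t y) +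
              l0 * g1 * xi1 g0 g1 t y * calI1 (zf l0 l1 g0 g1 t y)) *
          thetaf l0 l1 g0 g1 t y
      = 1 := by
  have hg0 : 0 < g0 := hg1.trans hg
  have hst : y / g0 ≤ y / g1 := div_le_div_of_nonneg_left hy.le hg1 hg.le
  have hxi_mem (t : ℝ) (ht : t ∈ Set.Icc (y / g0) (y / g1)) :
      0 ≤ xi0 g0 g1 t y ∧ 0 ≤ xi1 g0 g1 t y ∧ xi1 g0 g1 t y ≤ y / g1 := by
    have h0 := xi0_nonneg hg hg1 ht.2
    exact ⟨h0, xi1_nonneg hg hg0 ht.1, by linarith [xi0_add_xi1 hg.ne' t y, ht.2]⟩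
  have key := hasSum_integral_poissonRaceTermDeriv (A := l1 * (y / g1)) hst
    (fun t => (hasDerivAt_xi1 t y).const_mul l1)
    (fun t => by simpa using (hasDerivAt_xi0 (g0 := g0) (g1 := g1) t y).const_mul l0)
    (fun t ht => ⟨mul_nonneg hl1.le (hxi_mem t ht).2.1,
      mul_le_mul_of_nonneg_left (hxi_mem t ht).2.2 hl1.le⟩)
    (fun t ht => mul_nonneg hl0.le (hxi_mem t ht).1)
  have hxi1_end : xi1 g0 g1 (y / g1) y = y / g1 := by
    linarith [xi0_add_xi1 hg.ne' (y / g1) y, xi0_div_eq_zero (g0 := g0) hg1.ne' y]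
  simp only [hxi1_end, xi0_div_eq_zero hg1.ne', xi1_div_eq_zero hg0.ne', mul_zero,
    poissonRaceTerm_zero_left, sub_zero] at key
  rw [intervalIntegral.integral_congr fun t _ => fpt_density_eq l0 l1 g0 g1 t y,
    ← (hasSum_poissonRaceTerm_zero_right _).unique key, mul_div_assoc]
  ring
end

section
/- Assume the Kac-type scaling: sequences λ0_k, λ1_k > 0 and γ0_k > 0 > γ1_k satisfy λ0_k → ∞, λ1_k → ∞, λ0_k/λ1_k → ν² for some ν > 0, γ0_k/√λ0_k → σ0 and γ1_k/√λ1_k → −σ1 with σ0, σ1 > 0, and (γ0_k·λ1_k + γ1_k·λ0_k)/(λ0_k + λ1_k) → δ. Fix t > 0 and y ∈ ℝ. Then the exponent in the telegraph density converges: (√(λ0_k·ξ0_k(t,y)) − √(λ1_k·ξ1_k(t,y)))² → (y − δ·t)²/(2·Σ²·t) as k → ∞, where Σ = σ0·σ1/√((σ0² + σ1²)/2). Equivalently, λ0_k·ξ0_k(t,y) + λ1_k·ξ1_k(t,y) − 2√(z_k(t,y)) → (y − δ·t)²/(2·Σ²·t). -/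
/-!
Write `u = √(λ₀ξ₀) - √(λ₁ξ₁)`. Rationalizing, `u · (√(λ₀ξ₀) + √(λ₁ξ₁)) = λ₀ξ₀ - λ₁ξ₁`,
and `λ₀ξ₀ - λ₁ξ₁ = (λ₀ + λ₁)(y - δₖt)/(γ₀ - γ₁)` with `δₖ` the drift. After dividing
numerator and denominator by `√λ₁` every quantity has a finite limit: with `ρ = ν²` and
`γ₁/√λ₁ → -σ₁`, convergence of the drift forces `γ₀/√λ₁ → ρσ₁` (hence `σ₀ = νσ₁`), so
`ξ₀ → t/(ρ+1)`, `ξ₁ → ρt/(ρ+1)` and `u → (y - δt)/(2σ₁√(ρt/(ρ+1)))`. The second form is the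
first one expanded, valid once `ξ₀, ξ₁ > 0`, which their positive limits guarantee.
-/

open Real Filter MeasureTheory

open scoped Topology

theorem sqrt_sub_sqrt_eq_div {a b : ℝ} (ha : 0 ≤ a) (hb : 0 ≤ b) :
    √a - √b = (a - b) / (√a + √b) := by
  have ha' := sqrt_nonneg a
  have hb' := sqrt_nonneg b
  rcases (add_nonneg ha' hb').eq_or_lt with h | h
  · have ha0 : √a = 0 := by linarith
    have hb0 : √b = 0 := by linarith
    simp [ha0, hb0]
  · rw [eq_div_iff h.ne']
    linear_combination sq_sqrt ha - sq_sqrt hb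

theorem sqrt_sub_sqrt_sq {a b : ℝ} (ha : 0 ≤ a) (hb : 0 ≤ b) :
    (√a - √b) ^ 2 = a + b - 2 * √(a * b) := by
  rw [sqrt_mul ha, sub_sq, sq_sqrt ha, sq_sqrt hb]
  ring

theorem xi0_div_div {g0 g1 s : ℝ} (t x : ℝ) (hs : s ≠ 0) :
    xi0 (g0 / s) (g1 / s) t (x / s) = xi0 g0 g1 t x := by
  rw [xi0, xi0, ← sub_div, ← mul_div_right_comm, ← sub_div, div_div_div_cancel_right₀ hs]

theorem xi1_div_div {g0 g1 s : ℝ} (t x : ℝ) (hs : s ≠ 0) :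
    xi1 (g0 / s) (g1 / s) t (x / s) = xi1 g0 g1 t x := by
  rw [xi1, xi1, ← sub_div, ← mul_div_right_comm, ← sub_div, div_div_div_cancel_right₀ hs]

theorem div_mul_xi0_sub_xi1 {l0 l1 g0 g1 : ℝ} (t x : ℝ) (hl1 : l1 ≠ 0) (hl : l0 + l1 ≠ 0) :
    l0 / l1 * xi0 g0 g1 t x - xi1 g0 g1 t x =
      (l0 / l1 + 1) * (x - (g0 * l1 + g1 * l0) / (l0 + l1) * t) / (g0 - g1) := by
  rw [xi0, xi1]
  field_simp
  ring

section Limits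

variable {α : Type*} {l : Filter α}

theorem tendsto_sqrt_div_sqrt {l0 l1 : α → ℝ} {ν : ℝ} (hl1 : ∀ i, 0 ≤ l1 i) (hν : 0 ≤ ν)
    (h : Tendsto (fun i => l0 i / l1 i) l (𝓝 (ν ^ 2))) :
    Tendsto (fun i => √(l0 i) / √(l1 i)) l (𝓝 ν) := by
  simpa only [sqrt_div' _ (hl1 _), sqrt_sq hν] using h.sqrt

theorem tendsto_xi0_of_tendsto_div {g0 g1 s : α → ℝ} {a b : ℝ} (t x : ℝ)
    (hs : Tendsto s l atTop) (ha : Tendsto (fun i => g0 i / s i) l (𝓝 a))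
    (hb : Tendsto (fun i => g1 i / s i) l (𝓝 b)) (hab : a ≠ b) :
    Tendsto (fun i => xi0 (g0 i) (g1 i) t x) l (𝓝 (xi0 a b t 0)) := by
  have h := (((tendsto_const_nhds (x := x)).div_atTop hs).sub (hb.mul_const t)).div (ha.sub hb)
    (sub_ne_zero.2 hab)
  refine h.congr' ((hs.eventually_ne_atTop 0).mono fun i hi => ?_)
  exact xi0_div_div t x hi

theorem tendsto_xi1_of_tendsto_div {g0 g1 s : α → ℝ} {a b : ℝ} (t x : ℝ)
    (hs : Tendsto s l atTop) (ha : Tendsto (fun i => g0 i / s i) l (𝓝 a))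
    (hb : Tendsto (fun i => g1 i / s i) l (𝓝 b)) (hab : a ≠ b) :
    Tendsto (fun i => xi1 (g0 i) (g1 i) t x) l (𝓝 (xi1 a b t 0)) := by
  have h := ((ha.mul_const t).sub ((tendsto_const_nhds (x := x)).div_atTop hs)).div (ha.sub hb)
    (sub_ne_zero.2 hab)
  refine h.congr' ((hs.eventually_ne_atTop 0).mono fun i hi => ?_)
  exact xi1_div_div t x hi

/-- Since `(λ₀/λ₁ + 1) · drift = γ₀ + γ₁ λ₀/λ₁`, dividing by `√λ₁ → ∞` kills the drift. -/
theorem tendsto_div_sqrt_of_tendsto_drift {l0 l1 g0 g1 : α → ℝ} {ρ b δ : ℝ}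
    (hl0 : ∀ i, 0 ≤ l0 i) (hl1 : ∀ i, 0 < l1 i) (hl1top : Tendsto l1 l atTop)
    (hρ : Tendsto (fun i => l0 i / l1 i) l (𝓝 ρ))
    (hb : Tendsto (fun i => g1 i / √(l1 i)) l (𝓝 b))
    (hdrift : Tendsto (fun i => (g0 i * l1 i + g1 i * l0 i) / (l0 i + l1 i)) l (𝓝 δ)) :
    Tendsto (fun i => g0 i / √(l1 i)) l (𝓝 (-(b * ρ))) := by
  have h := ((hρ.add_const 1).mul (hdrift.div_atTop (tendsto_sqrt_atTop.comp hl1top))).sub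
    (hb.mul hρ)
  rw [mul_zero, zero_sub] at h
  refine h.congr fun i => ?_
  have hl : l0 i + l1 i ≠ 0 := (add_pos_of_nonneg_of_pos (hl0 i) (hl1 i)).ne'
  have hl1' : l1 i ≠ 0 := (hl1 i).ne'
  have hs : √(l1 i) ≠ 0 := (sqrt_pos.2 (hl1 i)).ne'
  simp only [Function.comp_apply]
  field_simp
  ring

theorem sqrt_mul_xi0_sub_sqrt_mul_xi1 {l0 l1 g0 g1 t x : ℝ} (hl0 : 0 ≤ l0) (hl1 : 0 < l1)
    (h0 : 0 ≤ xi0 g0 g1 t x) (h1 : 0 ≤ xi1 g0 g1 t x) :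
    √(l0 * xi0 g0 g1 t x) - √(l1 * xi1 g0 g1 t x) =
      (l0 / l1 + 1) * (x - (g0 * l1 + g1 * l0) / (l0 + l1) * t) / ((g0 - g1) / √l1) /
        (√(l0 / l1 * xi0 g0 g1 t x) + √(xi1 g0 g1 t x)) := by
  have hsplit : l0 * xi0 g0 g1 t x = l1 * (l0 / l1 * xi0 g0 g1 t x) := by
    field_simp
  rw [hsplit, sqrt_mul hl1.le, sqrt_mul hl1.le, ← mul_sub,
    sqrt_sub_sqrt_eq_div (by positivity) h1, div_mul_xi0_sub_xi1 t x hl1.ne' (by positivity),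
    div_div_eq_mul_div]
  ring

theorem tendsto_sqrt_mul_xi0_sub_sqrt_mul_xi1 {l0 l1 g0 g1 : α → ℝ} {ρ c δ t p q : ℝ} (y : ℝ)
    (hl0 : ∀ i, 0 ≤ l0 i) (hl1 : ∀ i, 0 < l1 i)
    (hρ : Tendsto (fun i => l0 i / l1 i) l (𝓝 ρ))
    (hc : Tendsto (fun i => (g0 i - g1 i) / √(l1 i)) l (𝓝 c)) (hc0 : c ≠ 0)
    (hdrift : Tendsto (fun i => (g0 i * l1 i + g1 i * l0 i) / (l0 i + l1 i)) l (𝓝 δ))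
    (hξ0 : Tendsto (fun i => xi0 (g0 i) (g1 i) t y) l (𝓝 p))
    (hξ1 : Tendsto (fun i => xi1 (g0 i) (g1 i) t y) l (𝓝 q)) (hp : 0 < p) (hq : 0 < q) :
    Tendsto (fun i => √(l0 i * xi0 (g0 i) (g1 i) t y) - √(l1 i * xi1 (g0 i) (g1 i) t y)) l
      (𝓝 ((ρ + 1) * (y - δ * t) / c / (√(ρ * p) + √q))) := by
  have hD : √(ρ * p) + √q ≠ 0 := (add_pos_of_nonneg_of_pos (sqrt_nonneg _) (sqrt_pos.2 hq)).ne'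
  have h := (((hρ.add_const 1).mul ((tendsto_const_nhds (x := y)).sub (hdrift.mul_const t))).div hc
    hc0).div ((hρ.mul hξ0).sqrt.add hξ1.sqrt) hD
  refine h.congr' ?_
  filter_upwards [hξ0.eventually (lt_mem_nhds hp), hξ1.eventually (lt_mem_nhds hq)] with i h0 h1
  exact (sqrt_mul_xi0_sub_sqrt_mul_xi1 (hl0 i) (hl1 i) h0.le h1.le).symm

theorem tendsto_telegraph_exponent {l0 l1 g0 g1 : α → ℝ} {ρ b δ t : ℝ} (y : ℝ)
    (hl0 : ∀ i, 0 ≤ l0 i) (hl1 : ∀ i, 0 < l1 i) (hl1top : Tendsto l1 l atTop)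
    (hρ : Tendsto (fun i => l0 i / l1 i) l (𝓝 ρ)) (hρ0 : 0 < ρ)
    (hb : Tendsto (fun i => g1 i / √(l1 i)) l (𝓝 b)) (hb0 : b < 0)
    (hdrift : Tendsto (fun i => (g0 i * l1 i + g1 i * l0 i) / (l0 i + l1 i)) l (𝓝 δ))
    (ht : 0 < t) :
    Tendsto (fun i => (√(l0 i * xi0 (g0 i) (g1 i) t y) - √(l1 i * xi1 (g0 i) (g1 i) t y)) ^ 2)
      l (𝓝 ((y - δ * t) ^ 2 * (ρ + 1) / (4 * b ^ 2 * ρ * t))) ∧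
    Tendsto (fun i => l0 i * xi0 (g0 i) (g1 i) t y + l1 i * xi1 (g0 i) (g1 i) t y -
        2 * √(zf (l0 i) (l1 i) (g0 i) (g1 i) t y))
      l (𝓝 ((y - δ * t) ^ 2 * (ρ + 1) / (4 * b ^ 2 * ρ * t))) := by
  have hs : Tendsto (fun i => √(l1 i)) l atTop := tendsto_sqrt_atTop.comp hl1top
  have ha := tendsto_div_sqrt_of_tendsto_drift hl0 hl1 hl1top hρ hb hdrift
  have hb0' : b ≠ 0 := hb0.ne
  have hρ1 : ρ + 1 ≠ 0 := by positivity
  have hc : -(b * ρ) - b = -b * (ρ + 1) := by ring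
  have hc0 : -(b * ρ) - b ≠ 0 := by rw [hc]; exact (mul_pos (neg_pos.2 hb0) (by positivity)).ne'
  have hξ0 : Tendsto (fun i => xi0 (g0 i) (g1 i) t y) l (𝓝 (t / (ρ + 1))) := by
    convert tendsto_xi0_of_tendsto_div t y hs ha hb (sub_ne_zero.1 hc0) using 2
    rw [xi0, hc]
    field_simp
    ring
  have hξ1 : Tendsto (fun i => xi1 (g0 i) (g1 i) t y) l (𝓝 (ρ * (t / (ρ + 1)))) := by
    convert tendsto_xi1_of_tendsto_div t y hs ha hb (sub_ne_zero.1 hc0) using 2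
    rw [xi1, hc]
    field_simp
    ring
  have hp : 0 < t / (ρ + 1) := by positivity
  have hu := tendsto_sqrt_mul_xi0_sub_sqrt_mul_xi1 y hl0 hl1 hρ
    (by simpa only [sub_div] using ha.sub hb) hc0 hdrift hξ0 hξ1 hp (by positivity)
  have hlim : ((ρ + 1) * (y - δ * t) / (-(b * ρ) - b) /
      (√(ρ * (t / (ρ + 1))) + √(ρ * (t / (ρ + 1))))) ^ 2 =
      (y - δ * t) ^ 2 * (ρ + 1) / (4 * b ^ 2 * ρ * t) := by
    rw [hc, ← two_mul, div_pow, mul_pow, sq_sqrt (by positivity)]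
    field_simp
    ring
  have hsq := hu.pow 2
  rw [hlim] at hsq
  refine ⟨hsq, hsq.congr' ?_⟩
  filter_upwards [hξ0.eventually (lt_mem_nhds hp),
    hξ1.eventually (lt_mem_nhds (by positivity))] with i h0 h1
  rw [sqrt_sub_sqrt_sq (mul_nonneg (hl0 i) h0.le) (mul_nonneg (hl1 i).le h1.le), zf]
  ring_nf

end Limits

theorem kac_scaling_exponent_limit_general (l0 l1 g0 g1 : ℕ → ℝ) (ν σ0 σ1 δ t y : ℝ)
    (hl0 : ∀ k, 0 < l0 k) (hl1 : ∀ k, 0 < l1 k)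
    (hν : 0 < ν) (hσ1 : 0 < σ1)
    (hl1top : Tendsto l1 atTop atTop)
    (hratio : Tendsto (fun k => l0 k / l1 k) atTop (nhds (ν ^ 2)))
    (hv0 : Tendsto (fun k => g0 k / Real.sqrt (l0 k)) atTop (nhds σ0))
    (hv1 : Tendsto (fun k => g1 k / Real.sqrt (l1 k)) atTop (nhds (-σ1)))
    (hdrift : Tendsto (fun k => (g0 k * l1 k + g1 k * l0 k) / (l0 k + l1 k)) atTop (nhds δ))
    (ht : 0 < t) :
    Tendsto (fun k =>
        (Real.sqrt (l0 k * xi0 (g0 k) (g1 k) t y) -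
          Real.sqrt (l1 k * xi1 (g0 k) (g1 k) t y)) ^ 2)
      atTop
      (nhds ((y - δ * t) ^ 2 /
        (2 * (σ0 * σ1 / Real.sqrt ((σ0 ^ 2 + σ1 ^ 2) / 2)) ^ 2 * t))) ∧
    Tendsto (fun k =>
        l0 k * xi0 (g0 k) (g1 k) t y + l1 k * xi1 (g0 k) (g1 k) t y -
          2 * Real.sqrt (zf (l0 k) (l1 k) (g0 k) (g1 k) t y))
      atTop
      (nhds ((y - δ * t) ^ 2 /
        (2 * (σ0 * σ1 / Real.sqrt ((σ0 ^ 2 + σ1 ^ 2) / 2)) ^ 2 * t))) := by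
  have hl0' : ∀ k, 0 ≤ l0 k := fun k => (hl0 k).le
  have hr := tendsto_sqrt_div_sqrt (fun k => (hl1 k).le) hν.le hratio
  have hσ : σ0 * ν = -(-σ1 * ν ^ 2) := by
    refine tendsto_nhds_unique ((hv0.mul hr).congr fun k => ?_)
      (tendsto_div_sqrt_of_tendsto_drift hl0' hl1 hl1top hratio hv1 hdrift)
    exact div_mul_div_cancel₀ (sqrt_pos.2 (hl0 k)).ne'
  obtain rfl : σ0 = ν * σ1 := by
    apply mul_right_cancel₀ hν.ne'
    linear_combination hσ
  have hdiffusion : (y - δ * t) ^ 2 * (ν ^ 2 + 1) / (4 * (-σ1) ^ 2 * ν ^ 2 * t) =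
      (y - δ * t) ^ 2 / (2 * (ν * σ1 * σ1 / √(((ν * σ1) ^ 2 + σ1 ^ 2) / 2)) ^ 2 * t) := by
    rw [div_pow, sq_sqrt (by positivity)]
    field_simp
    ring
  rw [← hdiffusion]
  exact tendsto_telegraph_exponent y hl0' hl1 hl1top hratio (by positivity) hv1
    (neg_lt_zero.2 hσ1) hdrift ht

/-- the key exponent limit behind the Kac scaling — under the Kac-type scaling
the exponent of the telegraph density converges to the Gaussian exponent
`(y − δt)²/(2Σ²t)` with `Σ = σ₀σ₁/√((σ₀²+σ₁²)/2)`, in both equivalent forms. -/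
theorem kac_scaling_exponent_limit (l0 l1 g0 g1 : ℕ → ℝ) (ν σ0 σ1 δ t y : ℝ)
    (hl0 : ∀ k, 0 < l0 k) (hl1 : ∀ k, 0 < l1 k)
    (hg0 : ∀ k, 0 < g0 k) (hg1 : ∀ k, g1 k < 0)
    (hν : 0 < ν) (hσ0 : 0 < σ0) (hσ1 : 0 < σ1)
    (hl0top : Tendsto l0 atTop atTop) (hl1top : Tendsto l1 atTop atTop)
    (hratio : Tendsto (fun k => l0 k / l1 k) atTop (nhds (ν ^ 2)))
    (hv0 : Tendsto (fun k => g0 k / Real.sqrt (l0 k)) atTop (nhds σ0))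
    (hv1 : Tendsto (fun k => g1 k / Real.sqrt (l1 k)) atTop (nhds (-σ1)))
    (hdrift : Tendsto (fun k => (g0 k * l1 k + g1 k * l0 k) / (l0 k + l1 k)) atTop (nhds δ))
    (ht : 0 < t) :
    Tendsto (fun k =>
        (Real.sqrt (l0 k * xi0 (g0 k) (g1 k) t y) -
          Real.sqrt (l1 k * xi1 (g0 k) (g1 k) t y)) ^ 2)
      atTop
      (nhds ((y - δ * t) ^ 2 /
        (2 * (σ0 * σ1 / Real.sqrt ((σ0 ^ 2 + σ1 ^ 2) / 2)) ^ 2 * t))) ∧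
    Tendsto (fun k =>
        l0 k * xi0 (g0 k) (g1 k) t y + l1 k * xi1 (g0 k) (g1 k) t y -
          2 * Real.sqrt (zf (l0 k) (l1 k) (g0 k) (g1 k) t y))
      atTop
      (nhds ((y - δ * t) ^ 2 /
        (2 * (σ0 * σ1 / Real.sqrt ((σ0 ^ 2 + σ1 ^ 2) / 2)) ^ 2 * t))) :=
  kac_scaling_exponent_limit_general l0 l1 g0 g1 ν σ0 σ1 δ t y hl0 hl1 hν hσ1 hl1top hratio hv0 hv1
    hdrift ht
end
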